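/- arXiv:2408.03237 — 8 statements merged into one kernel-verified Lean document; each statement's English description precedes it below -/
import Mathlib

section
/- Let R be a finite chain ring and let M be a finitely generated R-module. Then there exists an R-linear isomorphism between M and its dual module M* = Hom_R(M, R). -/
open IsLocalRing

section ChainLemmas

variable {R : Type*} [CommRing R]

/-- Every element generates the same ideal as a power of the uniformizer. -/
lemma chain_elem_classify [IsLocalRing R] {π : R}
    (hπ : Ideal.span {π} = maximalIdeal R) {n : ℕ} (hn : π ^ n = 0) (r : R) :
    ∃ j ≤ n, Ideal.span {r} = Ideal.span {π ^ j} := by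
  classical
  rcases eq_or_ne r 0 with rfl | hr
  · exact ⟨n, le_rfl, by rw [hn]⟩
  · set P : ℕ → Prop := fun j => π ^ j ∣ r with hP
    have h0 : P 0 := by simp [hP]
    have hnn : ¬ P n := by
      intro h
      rw [hP] at h
      simp only [hn, zero_dvd_iff] at h
      exact hr h
    set j := Nat.findGreatest P n with hj
    have hjP : P j := Nat.findGreatest_spec (Nat.zero_le n) h0
    have hjn : j ≤ n := Nat.findGreatest_le n
    have hjlt : j < n := lt_of_le_of_ne hjn fun h => hnn (h ▸ hjP)
    obtain ⟨c, hc⟩ := hjP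
    have hcu : IsUnit c := by
      by_contra hcu
      have hmem : c ∈ maximalIdeal R := hcu
      rw [← hπ, Ideal.mem_span_singleton] at hmem
      obtain ⟨d, rfl⟩ := hmem
      have : P (j + 1) := ⟨d, by rw [hc, pow_succ]; ring⟩
      exact Nat.findGreatest_is_greatest (Nat.lt_succ_self j) (Nat.succ_le_of_lt hjlt) this
    refine ⟨j, hjn, le_antisymm ?_ ?_⟩
    · exact Ideal.span_singleton_le_span_singleton.mpr ⟨c, hc⟩
    · refine Ideal.span_singleton_le_span_singleton.mpr ?_
      obtain ⟨u, rfl⟩ := hcu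
      exact ⟨(u⁻¹ : Rˣ), by rw [hc]; simp⟩

lemma chain_ideal_classify [IsLocalRing R] {π : R}
    (hπ : Ideal.span {π} = maximalIdeal R) {n : ℕ} (hn : π ^ n = 0) (I : Ideal R) :
    ∃ j ≤ n, I = Ideal.span {π ^ j} := by
  classical
  have hex : ∃ j, π ^ j ∈ I := ⟨n, by simp [hn]⟩
  set j := Nat.find hex with hjdef
  have hjI : π ^ j ∈ I := Nat.find_spec hex
  have hjn : j ≤ n := Nat.find_le (by simp [hn])
  refine ⟨j, hjn, le_antisymm ?_ ?_⟩
  · intro r hr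
    obtain ⟨i, hin, hi⟩ := chain_elem_classify hπ hn r
    have hpiI : π ^ i ∈ I := by
      have h1 : π ^ i ∈ Ideal.span {r} := hi ▸ Ideal.mem_span_singleton_self _
      exact (Ideal.span_singleton_le_iff_mem I).mpr hr h1
    have hji : j ≤ i := Nat.find_min' hex hpiI
    have h2 : r ∈ Ideal.span {π ^ i} := hi ▸ Ideal.mem_span_singleton_self r
    exact Ideal.span_singleton_le_span_singleton.mpr (pow_dvd_pow π hji) h2
  · exact (Ideal.span_singleton_le_iff_mem I).mpr hjI

lemma chain_ann [IsLocalRing R] {π : R}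
    (hπ : Ideal.span {π} = maximalIdeal R) {n : ℕ} (hn : π ^ n = 0)
    (hmin : ∀ j < n, π ^ j ≠ 0) {j : ℕ} (hj : j ≤ n) (r : R) :
    r * π ^ j = 0 ↔ r ∈ Ideal.span {π ^ (n - j)} := by
  constructor
  · intro h
    obtain ⟨i, hin, hi⟩ := chain_elem_classify hπ hn r
    have h1 : π ^ i ∈ Ideal.span {r} := hi ▸ Ideal.mem_span_singleton_self _
    rw [Ideal.mem_span_singleton] at h1
    obtain ⟨c, hc⟩ := h1
    have h2 : π ^ (i + j) = 0 := by
      rw [pow_add, hc, mul_comm r c, mul_assoc, h, mul_zero]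
    have hge : n ≤ i + j := le_of_not_gt fun hlt => hmin _ hlt h2
    have h3 : r ∈ Ideal.span {π ^ i} := hi ▸ Ideal.mem_span_singleton_self r
    exact Ideal.span_singleton_le_span_singleton.mpr (pow_dvd_pow π (by omega)) h3
  · intro h
    rw [Ideal.mem_span_singleton] at h
    obtain ⟨c, rfl⟩ := h
    have : π ^ (n - j) * π ^ j = 0 := by
      rw [← pow_add]
      have : n - j + j = n := by omega
      rw [this, hn]
    rw [mul_assoc, mul_comm c, ← mul_assoc, this, zero_mul]

end ChainLemmas

section DualCyclic

variable {R : Type*} [CommRing R]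

lemma chain_dual_cyclic [IsLocalRing R] {π : R}
    (hπ : Ideal.span {π} = maximalIdeal R) {n : ℕ} (hn : π ^ n = 0)
    (hmin : ∀ j < n, π ^ j ≠ 0) {k : ℕ} (hk : k ≤ n) :
    Nonempty (((R ⧸ Ideal.span {π ^ k}) →ₗ[R] R) ≃ₗ[R] (R ⧸ Ideal.span {π ^ k})) := by
  set I : Ideal R := Ideal.span {π ^ k} with hI
  -- evaluation at 1
  let ev : ((R ⧸ I) →ₗ[R] R) →ₗ[R] R :=
    { toFun := fun f => f 1
      map_add' := fun f g => rfl
      map_smul' := fun r f => rfl }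
  have hmk1 : ∀ r : R, Ideal.Quotient.mk I r = r • (1 : R ⧸ I) := fun r => by
    rw [Algebra.smul_def, mul_one, ← Ideal.Quotient.algebraMap_eq]
  have hev_inj : Function.Injective ev := by
    intro f g h
    refine LinearMap.ext fun x => ?_
    obtain ⟨r, rfl⟩ := Ideal.Quotient.mk_surjective x
    rw [hmk1 r, map_smul, map_smul]
    change r • ev f = r • ev g
    rw [h]
  let t : R →ₗ[R] R := LinearMap.toSpanSingleton R R (π ^ (n - k))
  have hrange : LinearMap.range ev = LinearMap.range t := by
    rw [← LinearMap.span_singleton_eq_range]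
    ext a
    constructor
    · rintro ⟨f, rfl⟩
      have h1 : (ev f) * π ^ k = 0 := by
        have h2 : (Ideal.Quotient.mk I (π ^ k)) = 0 := by
          rw [Ideal.Quotient.eq_zero_iff_mem, hI]
          exact Ideal.mem_span_singleton_self _
        have h3 : f (Ideal.Quotient.mk I (π ^ k)) = 0 := by rw [h2, map_zero]
        rw [hmk1, map_smul] at h3
        change π ^ k • ev f = 0 at h3
        rw [smul_eq_mul] at h3
        rw [mul_comm]; exact h3
      have := (chain_ann hπ hn hmin hk (ev f)).mp h1
      simpa using this
    · intro ha
      have ha' : a ∈ Ideal.span {π ^ (n - k)} := by simpa using ha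
      have hle : I ≤ LinearMap.ker (LinearMap.toSpanSingleton R R a) := by
        intro r hr
        rw [hI, Ideal.mem_span_singleton] at hr
        obtain ⟨c, rfl⟩ := hr
        rw [Ideal.mem_span_singleton] at ha'
        obtain ⟨d, rfl⟩ := ha'
        simp only [LinearMap.mem_ker, LinearMap.toSpanSingleton_apply, smul_eq_mul]
        have h4 : π ^ (n - k) * π ^ k = 0 := by
          rw [← pow_add]
          have : n - k + k = n := by omega
          rw [this, hn]
        calc π ^ k * c * (π ^ (n - k) * d) = (π ^ (n-k) * π ^ k) * (c * d) := by ring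
        _ = 0 := by rw [h4, zero_mul]
      refine ⟨Submodule.liftQ I (LinearMap.toSpanSingleton R R a) hle, ?_⟩
      change Submodule.liftQ I (LinearMap.toSpanSingleton R R a) hle 1 = a
      have : (1 : R ⧸ I) = Submodule.Quotient.mk (1 : R) := rfl
      rw [this, Submodule.liftQ_apply, LinearMap.toSpanSingleton_apply, one_smul]
  have hker : LinearMap.ker t = I := by
    ext r
    simp only [LinearMap.mem_ker, LinearMap.toSpanSingleton_apply, smul_eq_mul, t]
    have := chain_ann hπ hn hmin (j := n - k) (by omega) r
    rw [this]
    have : n - (n - k) = k := by omega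
    rw [this, hI]
  exact ⟨(LinearEquiv.ofInjective ev hev_inj).trans <|
    (LinearEquiv.ofEq _ _ hrange).trans <|
    t.quotKerEquivRange.symm.trans (Submodule.quotEquivOfEq _ _ hker)⟩

end DualCyclic

section BaerQuot

variable {R : Type*} [CommRing R]

lemma chain_baer_quot [IsLocalRing R] {π : R}
    (hπ : Ideal.span {π} = maximalIdeal R) {n : ℕ} (hn : π ^ n = 0)
    (hmin : ∀ j < n, π ^ j ≠ 0) {k : ℕ} (hk : k ≤ n) :
    Module.Baer (R ⧸ Ideal.span {π ^ k}) (R ⧸ Ideal.span {π ^ k}) := by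
  classical
  set I : Ideal R := Ideal.span {π ^ k} with hI
  set mk : R →+* R ⧸ I := Ideal.Quotient.mk I with hmk
  have hπkI : π ^ k ∈ I := Ideal.mem_span_singleton_self _
  intro J g
  -- classify J
  obtain ⟨j₀, hj₀n, hj₀⟩ := chain_ideal_classify hπ hn (J.comap mk)
  have hJ₀ : J = Ideal.span {mk (π ^ j₀)} := by
    have h1 := Ideal.map_comap_of_surjective mk Ideal.Quotient.mk_surjective J
    rw [hj₀, Ideal.map_span, Set.image_singleton] at h1
    exact h1.symm
  set j := min j₀ k with hjdef
  have hjk : j ≤ k := min_le_right _ _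
  have hJ : J = Ideal.span {mk (π ^ j)} := by
    rcases le_total j₀ k with h | h
    · rw [hJ₀]
      have hjj : j = j₀ := by omega
      rw [hjj]
    · have hz : mk (π ^ j₀) = 0 := by
        rw [hmk, Ideal.Quotient.eq_zero_iff_mem, hI, Ideal.mem_span_singleton]
        exact pow_dvd_pow π h
      have hz' : mk (π ^ j) = 0 := by
        rw [hmk, Ideal.Quotient.eq_zero_iff_mem, hI, Ideal.mem_span_singleton]
        have : j = k := by omega
        rw [this]
      rw [hJ₀, hz, hz']
  have hmem : mk (π ^ j) ∈ J := by rw [hJ]; exact Ideal.mem_span_singleton_self _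
  set a : R ⧸ I := g ⟨mk (π ^ j), hmem⟩ with ha
  -- π^(k-j) * a = 0
  have hka : mk (π ^ (k - j)) * a = 0 := by
    have h1 : (mk (π ^ (k - j))) • (⟨mk (π ^ j), hmem⟩ : J) = (0 : J) := by
      apply Subtype.ext
      show (mk (π ^ (k - j))) • (mk (π ^ j)) = (0 : R ⧸ I)
      rw [smul_eq_mul, ← map_mul, ← pow_add]
      have : k - j + j = k := by omega
      rw [this, hmk, Ideal.Quotient.eq_zero_iff_mem]
      exact hπkI
    calc mk (π ^ (k - j)) * a = mk (π ^ (k - j)) • g ⟨mk (π ^ j), hmem⟩ := rfl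
      _ = g ((mk (π ^ (k - j))) • ⟨mk (π ^ j), hmem⟩) := (map_smul g _ _).symm
      _ = 0 := by rw [h1, map_zero]
  -- a ∈ span {mk (π^j)}
  obtain ⟨r, hr⟩ := Ideal.Quotient.mk_surjective a
  have h2 : π ^ (k - j) * r ∈ I := by
    rw [← Ideal.Quotient.eq_zero_iff_mem]
    show mk (π ^ (k - j) * r) = 0
    rw [map_mul, hr, hka]
  rw [hI, Ideal.mem_span_singleton] at h2
  obtain ⟨c, hc⟩ := h2
  have h3 : (r - π ^ j * c) * π ^ (k - j) = 0 := by
    have : π ^ (k - j) * π ^ j = π ^ k := by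
      rw [← pow_add]; congr 1; omega
    calc (r - π ^ j * c) * π ^ (k - j) = π ^ (k - j) * r - (π ^ (k-j) * π ^ j) * c := by ring
      _ = π ^ k * c - π ^ k * c := by rw [hc, this]
      _ = 0 := sub_self _
  have h4 : r - π ^ j * c ∈ Ideal.span {π ^ (n - (k - j))} :=
    (chain_ann hπ hn hmin (by omega) _).mp h3
  have h5 : r ∈ Ideal.span {π ^ j} := by
    have h6 : r - π ^ j * c ∈ Ideal.span {π ^ j} := by
      refine Ideal.span_singleton_le_span_singleton.mpr (pow_dvd_pow π (by omega)) h4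
    have h7 : π ^ j * c ∈ Ideal.span {π ^ j} := Ideal.mul_mem_right _ _ (Ideal.mem_span_singleton_self _)
    simpa using add_mem h6 h7
  rw [Ideal.mem_span_singleton] at h5
  obtain ⟨b₀, hb₀⟩ := h5
  -- a = mk π^j * mk b₀
  have hab : a = mk (π ^ j) * mk b₀ := by rw [← hr, ← map_mul, ← hb₀]
  refine ⟨LinearMap.toSpanSingleton _ _ (mk b₀), fun x hx => ?_⟩
  have hx' := hx
  rw [hJ, Ideal.mem_span_singleton] at hx'
  obtain ⟨cS, hcS⟩ := hx'
  have hsub : (⟨x, hx⟩ : J) = cS • (⟨mk (π ^ j), hmem⟩ : J) := by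
    apply Subtype.ext
    show x = cS • mk (π ^ j)
    rw [smul_eq_mul, mul_comm]; exact hcS
  rw [hsub, map_smul, ← ha, LinearMap.toSpanSingleton_apply, smul_eq_mul, smul_eq_mul,
    hab, hcS]
  ring

end BaerQuot

section Key

universe u v

lemma chain_key {R : Type u} [CommRing R] [Finite R] [IsLocalRing R] {π : R}
    (hπ : Ideal.span {π} = maximalIdeal R) {n : ℕ} (hn : π ^ n = 0)
    (hmin : ∀ j < n, π ^ j ≠ 0) :
    ∀ (c : ℕ) (M : Type v) [AddCommGroup M] [Module R M] [Finite M],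
      Nat.card M ≤ c → Nonempty (M ≃ₗ[R] (M →ₗ[R] R)) := by
  intro c
  induction c with
  | zero =>
    intro M _ _ _ hcard
    have : 0 < Nat.card M := Nat.card_pos
    omega
  | succ c ih =>
    intro M _ _ _ hcard
    by_cases hMs : Subsingleton M
    · haveI : Subsingleton (M →ₗ[R] R) :=
        ⟨fun f g => by refine LinearMap.ext fun x => ?_; rw [Subsingleton.elim x 0]; simp⟩
      exact ⟨LinearEquiv.ofLinear 0 0 (Subsingleton.elim _ _) (Subsingleton.elim _ _)⟩
    · haveI : Nontrivial M := not_subsingleton_iff_nontrivial.mp hMs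
      classical
      have hord : ∀ x : M, ∃ j, π ^ j • x = 0 := fun x => ⟨n, by rw [hn, zero_smul]⟩
      obtain ⟨x₀, hx₀⟩ := Finite.exists_max fun x : M => Nat.find (hord x)
      set k := Nat.find (hord x₀) with hkdef
      have hkx : π ^ k • x₀ = 0 := Nat.find_spec (hord x₀)
      have hkn : k ≤ n := Nat.find_le (by rw [hn, zero_smul])
      have hall : ∀ y : M, π ^ k • y = 0 := by
        intro y
        have h1 : π ^ (Nat.find (hord y)) • y = 0 := Nat.find_spec (hord y)
        have h2 : k = (k - Nat.find (hord y)) + Nat.find (hord y) := by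
          have := hx₀ y; omega
        rw [h2, pow_add, mul_smul, h1, smul_zero]
      have hk1 : 1 ≤ k := by
        rcases exists_ne (0 : M) with ⟨y, hy⟩
        by_contra hcon
        have hk0 : Nat.find (hord y) = 0 := by have := hx₀ y; omega
        have h0 := Nat.find_spec (hord y)
        rw [hk0, pow_zero, one_smul] at h0
        exact hy h0
      set I : Ideal R := Ideal.span {π ^ k} with hI
      have hann : ∀ r : R, r • x₀ = 0 ↔ r ∈ I := by
        intro r
        constructor
        · intro hr
          obtain ⟨i, hin, hi⟩ := chain_elem_classify hπ hn r
          have h1 : π ^ i ∈ Ideal.span {r} := hi ▸ Ideal.mem_span_singleton_self _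
          rw [Ideal.mem_span_singleton] at h1
          obtain ⟨cc, hcc⟩ := h1
          have hpi : π ^ i • x₀ = 0 := by rw [hcc, mul_comm, mul_smul, hr, smul_zero]
          have hki : k ≤ i := Nat.find_min' (hord x₀) hpi
          have h3 : r ∈ Ideal.span {π ^ i} := hi ▸ Ideal.mem_span_singleton_self r
          exact Ideal.span_singleton_le_span_singleton.mpr (pow_dvd_pow π hki) h3
        · intro hr
          rw [hI, Ideal.mem_span_singleton] at hr
          obtain ⟨cc, rfl⟩ := hr
          rw [mul_smul, hall]
      have htor : Module.IsTorsionBySet R M (I : Set R) :=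
        (Module.isTorsionBySet_span_singleton_iff _).mpr hall
      letI : Module (R ⧸ I) M := htor.module
      haveI : IsScalarTower R (R ⧸ I) M := htor.isScalarTower
      have hmk_smul : ∀ (r : R) (x : M), (Ideal.Quotient.mk I r) • x = r • x :=
        fun r x => htor.mk_smul r x
      let φ : (R ⧸ I) →ₗ[R ⧸ I] M := LinearMap.toSpanSingleton (R ⧸ I) M x₀
      have hφ : Function.Injective φ := by
        intro s t hst
        obtain ⟨r, rfl⟩ := Ideal.Quotient.mk_surjective s
        obtain ⟨r', rfl⟩ := Ideal.Quotient.mk_surjective t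
        have hsub : (r - r') • x₀ = 0 := by
          have h1 : (Ideal.Quotient.mk I r) • x₀ = (Ideal.Quotient.mk I r') • x₀ := hst
          rw [hmk_smul, hmk_smul] at h1
          rw [sub_smul, h1, sub_self]
        exact Ideal.Quotient.eq.mpr ((hann _).mp hsub)
      obtain ⟨h, hh⟩ := (chain_baer_quot hπ hn hmin hkn).extension_property φ hφ LinearMap.id
      let g : M →ₗ[R] (R ⧸ I) := h.restrictScalars R
      let sec : (R ⧸ I) →ₗ[R] M := φ.restrictScalars R
      have hgs : ∀ s : (R ⧸ I), g (sec s) = s := fun s => by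
        have := DFunLike.congr_fun hh s
        simp at this; exact this
      let F : M →ₗ[R] (R ⧸ I) × (LinearMap.ker g) :=
        LinearMap.prod g ((LinearMap.id - sec ∘ₗ g).codRestrict (LinearMap.ker g)
          (fun m => by
            simp only [LinearMap.mem_ker, LinearMap.sub_apply, LinearMap.id_apply,
              LinearMap.comp_apply, map_sub, hgs, sub_self]))
      let G : (R ⧸ I) × (LinearMap.ker g) →ₗ[R] M :=
        sec ∘ₗ LinearMap.fst R _ _ + (LinearMap.ker g).subtype ∘ₗ LinearMap.snd R _ _
      have hFG : F ∘ₗ G = LinearMap.id := by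
        apply LinearMap.ext
        rintro ⟨s, y⟩
        have hy : g y.1 = 0 := LinearMap.mem_ker.mp y.2
        refine Prod.ext ?_ (Subtype.ext ?_)
        · show g (sec s + y.1) = s
          rw [map_add, hgs, hy, add_zero]
        · show (sec s + y.1) - sec (g (sec s + y.1)) = y.1
          rw [map_add, hgs, hy, add_zero]
          abel
      have hGF : G ∘ₗ F = LinearMap.id := by
        apply LinearMap.ext
        intro m
        show sec (g m) + (m - sec (g m)) = m
        abel
      let e : M ≃ₗ[R] (R ⧸ I) × (LinearMap.ker g) := LinearEquiv.ofLinear F G hFG hGF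
      have hIne : I ≠ ⊤ := by
        intro htop
        have h1 : (1 : R) ∈ I := htop ▸ Submodule.mem_top
        rw [hI, Ideal.mem_span_singleton] at h1
        have hu : IsUnit (π ^ k) := isUnit_of_dvd_one h1
        have hπm : π ∈ maximalIdeal R := by
          rw [← hπ]; exact Ideal.mem_span_singleton_self _
        have hπk : π ^ k ∈ maximalIdeal R := by
          have hke : k = (k - 1) + 1 := by omega
          rw [hke, pow_succ]
          exact Ideal.mul_mem_left _ _ hπm
        exact (IsLocalRing.mem_maximalIdeal _).mp hπk hu
      haveI := Ideal.Quotient.nontrivial_iff.mpr hIne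
      haveI : Finite (R ⧸ I) := Quotient.finite _
      have hcard2 : 1 < Nat.card (R ⧸ I) := Finite.one_lt_card_iff_nontrivial.mpr inferInstance
      have hcardker : 0 < Nat.card (LinearMap.ker g) := Nat.card_pos
      have hcardM : Nat.card M = Nat.card (R ⧸ I) * Nat.card (LinearMap.ker g) := by
        rw [Nat.card_congr e.toEquiv, Nat.card_prod]
      have hle : Nat.card (LinearMap.ker g) ≤ c := by
        have h2 : 2 * Nat.card (LinearMap.ker g) ≤ Nat.card M := by
          rw [hcardM]
          exact Nat.mul_le_mul_right _ hcard2
        omega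
      obtain ⟨eN⟩ := ih (LinearMap.ker g) hle
      obtain ⟨eS⟩ := chain_dual_cyclic hπ hn hmin hkn
      exact ⟨e.trans <| (LinearEquiv.prodCongr eS.symm eN).trans <|
        (LinearMap.coprodEquiv R).trans (e.arrowCongr (LinearEquiv.refl R R)).symm⟩

end Key

/-- Let `R` be a finite chain ring and let `M` be a finitely generated
`R`-module. Then there is an `R`-linear isomorphism between `M` and its dual
`M* = Hom_R(M, R)`. -/
theorem nonempty_linearEquiv_dual_of_finite_chain_ring
    {R : Type*} [CommRing R] [Finite R] [IsLocalRing R]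
    (hchain : (IsLocalRing.maximalIdeal R).IsPrincipal)
    {M : Type*} [AddCommGroup M] [Module R M] [Module.Finite R M] :
    Nonempty (M ≃ₗ[R] (M →ₗ[R] R)) := by
  classical
  obtain ⟨π, hπ'⟩ := hchain
  have hπ : Ideal.span {π} = maximalIdeal R := by
    rw [hπ', Ideal.submodule_span_eq]
  obtain ⟨N, hN⟩ := IsArtinianRing.isNilpotent_jacobson_bot (R := R)
  rw [IsLocalRing.jacobson_eq_maximalIdeal ⊥ bot_ne_top] at hN
  have hπm : π ∈ maximalIdeal R := by
    rw [← hπ]; exact Ideal.mem_span_singleton_self _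
  have hπN : π ^ N = 0 := by
    have h1 : π ^ N ∈ (maximalIdeal R) ^ N := Ideal.pow_mem_pow hπm N
    rw [hN] at h1
    simpa using h1
  have hex : ∃ m, π ^ m = 0 := ⟨N, hπN⟩
  haveI : Finite M := Module.finite_of_finite R
  exact chain_key hπ (Nat.find_spec hex) (fun j hj => Nat.find_min hex hj)
    (Nat.card M) M le_rfl
end

section
/- Let R be a finite chain ring and let M be a finitely generated R-module. Then the cardinality of the dual module M* = Hom_R(M, R) equals the cardinality of M. -/
set_option linter.unusedSectionVars false

section aux

variable {R : Type*} [CommRing R] [Finite R] [IsLocalRing R]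

/-- In a finite local ring, every nonunit is nilpotent. -/
lemma fcr_nilpotent {p : R} (hp : p ∈ IsLocalRing.maximalIdeal R) : ∃ m, p ^ m = 0 := by
  obtain ⟨a, b, hab, h⟩ := Finite.exists_ne_map_eq_of_infinite (fun k : ℕ => p ^ k)
  wlog hlt : a < b generalizing a b
  · exact this b a hab.symm h.symm (by omega)
  have hmem : p ^ (b - a) ∈ IsLocalRing.maximalIdeal R :=
    Ideal.pow_mem_of_mem _ hp _ (by omega)
  have hu : IsUnit (1 - p ^ (b - a)) :=
    IsLocalRing.isUnit_one_sub_self_of_mem_nonunits _ hmem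
  refine ⟨a, ?_⟩
  have : p ^ a * (1 - p ^ (b - a)) = 0 := by
    have : p ^ a * p ^ (b - a) = p ^ b := by
      rw [← pow_add]; congr 1; omega
    rw [mul_sub, mul_one, this, h, sub_self]
  exact (hu.mul_left_eq_zero).mp this

variable {p : R} (hp : IsLocalRing.maximalIdeal R = Ideal.span {p})
  {n : ℕ} (hn : p ^ n = 0) (hmin : ∀ m, p ^ m = 0 → n ≤ m)

include hp hn hmin

/-- Every nonzero element is a unit times a power of `p`. -/
lemma fcr_val {x : R} (hx : x ≠ 0) : ∃ k < n, ∃ u : R, IsUnit u ∧ x = p ^ k * u := by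
  have hex : ∃ k, x ∉ Ideal.span {p ^ k} := by
    refine ⟨n, ?_⟩
    rw [hn, Ideal.span_singleton_eq_bot.mpr rfl]
    simpa using hx
  classical
  set K := Nat.find hex with hK
  have hK0 : K ≠ 0 := by
    intro h0
    have := Nat.find_spec hex
    rw [← hK, h0] at this
    simp at this
  set j := K - 1 with hj
  have hmem : x ∈ Ideal.span {p ^ j} := by
    by_contra hc
    have h2 : K ≤ j := Nat.find_le hc
    omega
  have hnot : x ∉ Ideal.span {p ^ (j + 1)} := by
    have : j + 1 = K := by omega
    rw [this]
    exact Nat.find_spec hex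
  obtain ⟨u, hu⟩ := Ideal.mem_span_singleton'.mp hmem
  refine ⟨j, ?_, u, ?_, by rw [← hu]; ring⟩
  · by_contra hge
    push_neg at hge
    apply hx
    rw [← hu]
    have hz : p ^ j = 0 := by
      have h3 : p ^ j = p ^ n * p ^ (j - n) := by rw [← pow_add]; congr 1; omega
      rw [h3, hn, zero_mul]
    rw [hz, mul_zero]
  · by_contra hnu
    have : u ∈ IsLocalRing.maximalIdeal R := hnu
    rw [hp] at this
    obtain ⟨v, hv⟩ := Ideal.mem_span_singleton'.mp this
    apply hnot
    apply Ideal.mem_span_singleton'.mpr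
    exact ⟨v, by rw [← hu, ← hv]; ring⟩


/-- Every ideal is generated by a power of `p`. -/
lemma fcr_ideal (I : Ideal R) : ∃ k ≤ n, I = Ideal.span {p ^ k} := by
  classical
  have hex : ∃ k, p ^ k ∈ I := ⟨n, by rw [hn]; exact I.zero_mem⟩
  set k := Nat.find hex with hk
  have hkmem : p ^ k ∈ I := Nat.find_spec hex
  have hkn : k ≤ n := Nat.find_le (by rw [hn]; exact I.zero_mem)
  refine ⟨k, hkn, le_antisymm ?_ ?_⟩
  · intro x hxI
    rcases eq_or_ne x 0 with rfl | hx0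
    · exact Submodule.zero_mem _
    obtain ⟨j, hjn, u, hu, rfl⟩ := fcr_val hp hn hmin hx0
    have hpj : p ^ j ∈ I := by
      have : p ^ j = (p ^ j * u) * ↑hu.unit⁻¹ := by
        rw [mul_assoc, IsUnit.mul_val_inv, mul_one]
      rw [this]
      exact I.mul_mem_right _ hxI
    have hkj : k ≤ j := Nat.find_le hpj
    apply Ideal.mem_span_singleton'.mpr
    refine ⟨p ^ (j - k) * u, ?_⟩
    rw [mul_right_comm, ← pow_add]
    congr 2
    omega
  · rw [Ideal.span_le, Set.singleton_subset_iff]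
    exact hkmem

/-- Annihilator of `p ^ k` is the ideal generated by `p ^ (n - k)`. -/
lemma fcr_ann {k : ℕ} (hk : k ≤ n) (x : R) :
    p ^ k * x = 0 ↔ x ∈ Ideal.span {p ^ (n - k)} := by
  constructor
  · intro hzero
    rcases eq_or_ne x 0 with rfl | hx0
    · exact Submodule.zero_mem _
    obtain ⟨j, hjn, u, hu, rfl⟩ := fcr_val hp hn hmin hx0
    have h1 : p ^ (k + j) * u = 0 := by rw [pow_add, mul_assoc]; exact hzero
    have h2 : p ^ (k + j) = 0 := by
      have : p ^ (k + j) = (p ^ (k + j) * u) * ↑hu.unit⁻¹ := by rw [mul_assoc, IsUnit.mul_val_inv, mul_one]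
      rw [this, h1, zero_mul]
    have h3 : n ≤ k + j := hmin _ h2
    apply Ideal.mem_span_singleton'.mpr
    refine ⟨p ^ (j - (n - k)) * u, ?_⟩
    rw [mul_right_comm, ← pow_add]
    congr 2
    omega
  · intro hx
    obtain ⟨c, hc⟩ := Ideal.mem_span_singleton'.mp hx
    rw [← hc, mul_comm c, ← mul_assoc, ← pow_add]
    have : k + (n - k) = n := by omega
    rw [this, hn, zero_mul]

/-- Cardinality of `(p^k)` equals the cardinality of `R ⧸ (p^(n-k))`. -/
lemma fcr_card {k : ℕ} (hk : k ≤ n) :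
    Nat.card (Ideal.span {p ^ k} : Ideal R) =
      Nat.card (R ⧸ Ideal.span {p ^ (n - k)}) := by
  let f := LinearMap.toSpanSingleton R R (p ^ k)
  have hker : LinearMap.ker f = Ideal.span {p ^ (n - k)} := by
    ext x
    simp only [LinearMap.mem_ker, f, LinearMap.toSpanSingleton_apply, smul_eq_mul]
    rw [mul_comm]
    exact fcr_ann hp hn hmin hk x
  have hrange : LinearMap.range f = Ideal.span {p ^ k} := by
    rw [← LinearMap.span_singleton_eq_range, Ideal.span, Ideal.submodule_span_eq]
  calc Nat.card (Ideal.span {p ^ k} : Ideal R)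
      = Nat.card (LinearMap.range f) := by rw [hrange]
    _ = Nat.card (R ⧸ LinearMap.ker f) := (Nat.card_congr (f.quotKerEquivRange).toEquiv).symm
    _ = Nat.card (R ⧸ Ideal.span {p ^ (n - k)}) := by rw [hker]


/-- Dual of a cyclic module has the same cardinality. -/
lemma fcr_cyclic_dual (I : Ideal R) :
    Nat.card ((R ⧸ I) →ₗ[R] R) = Nat.card (R ⧸ I) := by
  obtain ⟨k, hk, rfl⟩ := fcr_ideal hp hn hmin I
  have e : ((R ⧸ Ideal.span {p ^ k}) →ₗ[R] R) ≃
      (Ideal.span {p ^ (n - k)} : Ideal R) := by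
    refine ⟨fun f => ⟨f (Submodule.Quotient.mk 1), ?_⟩,
      fun y => Submodule.liftQ _ (LinearMap.toSpanSingleton R R y.1) ?_, ?_, ?_⟩
    · rw [← fcr_ann hp hn hmin hk]
      have h1 : (Submodule.Quotient.mk (p ^ k) : R ⧸ Ideal.span {p ^ k}) = 0 := by
        rw [Submodule.Quotient.mk_eq_zero]
        exact Ideal.mem_span_singleton_self _
      calc p ^ k * f (Submodule.Quotient.mk 1)
          = f ((p ^ k) • (Submodule.Quotient.mk 1)) := by rw [map_smul]; rfl
        _ = f (Submodule.Quotient.mk (p ^ k)) := by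
            rw [← Submodule.Quotient.mk_smul, smul_eq_mul, mul_one]
        _ = 0 := by rw [h1, map_zero]
    · intro x hx
      obtain ⟨c, hc⟩ := Ideal.mem_span_singleton'.mp hx
      simp only [LinearMap.mem_ker, LinearMap.toSpanSingleton_apply, smul_eq_mul]
      have hy := y.2
      rw [← fcr_ann hp hn hmin hk] at hy
      rw [← hc, mul_assoc, mul_comm c, hy, zero_mul]
    · intro f
      apply Submodule.linearMap_qext
      refine LinearMap.ext fun r => ?_
      simp only [LinearMap.comp_apply, Submodule.mkQ_apply, Submodule.liftQ_apply,
        LinearMap.toSpanSingleton_apply, smul_eq_mul]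
      calc r * f (Submodule.Quotient.mk 1)
          = f (r • (Submodule.Quotient.mk 1)) := by rw [map_smul]; rfl
        _ = f (Submodule.Quotient.mk r) := by
            rw [← Submodule.Quotient.mk_smul, smul_eq_mul, mul_one]
    · intro y
      ext
      show (1 : R) • (y : R) = (y : R)
      rw [one_smul]
  rw [Nat.card_congr e]
  have h2 := fcr_card hp hn hmin (show n - k ≤ n by omega)
  have h3 : n - (n - k) = k := by omega
  rw [h3] at h2
  exact h2

/-- A finite chain ring is self-injective (Baer's criterion). -/
lemma fcr_baer : Module.Baer R R := by
  intro I g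
  obtain ⟨k, hk, rfl⟩ := fcr_ideal hp hn hmin I
  have hpk : p ^ k ∈ Ideal.span {p ^ k} := Ideal.mem_span_singleton_self _
  set y := g ⟨p ^ k, hpk⟩ with hy
  have hann : p ^ (n - k) * y = 0 := by
    have h1 : (p ^ (n - k)) • (⟨p ^ k, hpk⟩ : Ideal.span {p ^ k}) = 0 := by
      ext
      simp only [SetLike.val_smul, smul_eq_mul, ZeroMemClass.coe_zero, ← pow_add]
      have : n - k + k = n := by omega
      rw [this, hn]
    calc p ^ (n - k) * y = (p ^ (n - k)) • y := rfl
      _ = g ((p ^ (n - k)) • (⟨p ^ k, hpk⟩ : Ideal.span {p ^ k})) := by rw [map_smul]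
      _ = 0 := by rw [h1, map_zero]
  have hyk : y ∈ Ideal.span {p ^ k} := by
    have := (fcr_ann hp hn hmin (show n - k ≤ n by omega) y).mp hann
    have h3 : n - (n - k) = k := by omega
    rwa [h3] at this
  obtain ⟨c, hc⟩ := Ideal.mem_span_singleton'.mp hyk
  refine ⟨LinearMap.toSpanSingleton R R c, fun x hx => ?_⟩
  obtain ⟨r, hr⟩ := Ideal.mem_span_singleton'.mp hx
  have hsub : (⟨x, hx⟩ : Ideal.span {p ^ k}) = r • ⟨p ^ k, hpk⟩ := by
    ext; simpa using hr.symm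
  rw [hsub, map_smul]
  simp only [LinearMap.toSpanSingleton_apply, smul_eq_mul, ← hy, ← hc, ← hr]
  ring


lemma fcr_main (c : ℕ) :
    ∀ (M : Type v) [AddCommGroup M] [Module R M] [Module.Finite R M],
      Nat.card M = c → Nat.card (M →ₗ[R] R) = c := by
  induction c using Nat.strong_induction_on with
  | _ c IH =>
    intro M _ _ _ hc
    have hMfin : Finite M := Module.finite_of_finite R
    rcases subsingleton_or_nontrivial M with hM | hM
    · have hsub : Subsingleton (M →ₗ[R] R) :=
        ⟨fun f g => LinearMap.ext fun m => by
          rw [Subsingleton.elim m 0, map_zero, map_zero]⟩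
      rw [← hc, Nat.card_of_subsingleton (0 : M →ₗ[R] R),
        Nat.card_of_subsingleton (0 : M)]
    · obtain ⟨x, hx⟩ := exists_ne (0 : M)
      set N : Submodule R M := Submodule.span R {x} with hN
      have hxN : x ∈ N := Submodule.mem_span_singleton_self x
      have hNnt : Nontrivial N :=
        ⟨⟨⟨x, hxN⟩, 0, fun h => hx (by simpa using congrArg Subtype.val h)⟩⟩
      have h2N : 1 < Nat.card N := Finite.one_lt_card_iff_nontrivial.mpr hNnt
      have hMsplit : Nat.card M = Nat.card N * Nat.card (M ⧸ N) :=
        Submodule.card_eq_card_quotient_mul_card N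
      have hQfin' : Finite (M ⧸ N) := Quotient.finite _
      have hQfin : Module.Finite R (M ⧸ N) :=
        Module.Finite.of_surjective N.mkQ (Submodule.mkQ_surjective N)
      have hbpos : 0 < Nat.card (M ⧸ N) := Nat.card_pos
      have hQlt : Nat.card (M ⧸ N) < c := by
        rw [← hc, hMsplit]
        calc Nat.card (M ⧸ N) = 1 * Nat.card (M ⧸ N) := (one_mul _).symm
          _ < Nat.card N * Nat.card (M ⧸ N) := by
              exact (Nat.mul_lt_mul_right hbpos).mpr h2N
      have hQdual : Nat.card ((M ⧸ N) →ₗ[R] R) = Nat.card (M ⧸ N) :=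
        IH _ hQlt (M ⧸ N) rfl
      -- dual of the cyclic module N
      have hNdual : Nat.card ((N : Submodule R M) →ₗ[R] R) = Nat.card N := by
        let f := LinearMap.toSpanSingleton R M x
        have hrange : LinearMap.range f = N :=
          (LinearMap.span_singleton_eq_range R M x).symm
        let e1 : (R ⧸ LinearMap.ker f) ≃ₗ[R] N :=
          (f.quotKerEquivRange).trans (LinearEquiv.ofEq _ _ hrange)
        let e2 := LinearEquiv.arrowCongr (σ₁₁' := RingHom.id R) (σ₂₂' := RingHom.id R) e1 (LinearEquiv.refl R R)
        calc Nat.card ((N : Submodule R M) →ₗ[R] R)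
            = Nat.card ((R ⧸ LinearMap.ker f) →ₗ[R] R) :=
              (Nat.card_congr e2.toEquiv).symm
          _ = Nat.card (R ⧸ LinearMap.ker f) :=
              fcr_cyclic_dual hp hn hmin (LinearMap.ker f)
          _ = Nat.card N := Nat.card_congr e1.toEquiv
      -- restriction map
      let ρ : (M →ₗ[R] R) →ₗ[R] ((N : Submodule R M) →ₗ[R] R) :=
        { toFun := fun f => f ∘ₗ N.subtype
          map_add' := fun f g => LinearMap.ext fun _ => rfl
          map_smul' := fun r f => LinearMap.ext fun _ => rfl }
      have hρ : Function.Surjective ρ := by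
        intro g
        obtain ⟨h, hh⟩ := (fcr_baer hp hn hmin).extension_property N.subtype
          (Submodule.injective_subtype N) g
        exact ⟨h, hh⟩
      have hsplit2 : Nat.card (M →ₗ[R] R) =
          Nat.card (LinearMap.ker ρ) * Nat.card ((N : Submodule R M) →ₗ[R] R) := by
        rw [Submodule.card_eq_card_quotient_mul_card (LinearMap.ker ρ)]
        congr 1
        exact Nat.card_congr (ρ.quotKerEquivOfSurjective hρ).toEquiv
      have eker : ((M ⧸ N) →ₗ[R] R) ≃ LinearMap.ker ρ := by
        refine ⟨fun φ => ⟨φ ∘ₗ N.mkQ, ?_⟩, fun ψ => Submodule.liftQ N ψ.1 ?_, ?_, ?_⟩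
        · rw [LinearMap.mem_ker]
          refine LinearMap.ext fun nn => ?_
          show φ (N.mkQ (N.subtype nn)) = 0
          have : N.mkQ (N.subtype nn) = 0 := by
            rw [Submodule.mkQ_apply, Submodule.Quotient.mk_eq_zero]
            exact nn.2
          rw [this, map_zero]
        · intro m hm
          have hψ := ψ.2
          rw [LinearMap.mem_ker] at hψ
          have h0 := LinearMap.congr_fun hψ ⟨m, hm⟩
          rw [LinearMap.zero_apply] at h0
          exact h0
        · intro φ
          apply Submodule.linearMap_qext
          refine LinearMap.ext fun m => ?_
          rfl
        · intro ψ
          ext m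
          rfl
      calc Nat.card (M →ₗ[R] R)
          = Nat.card (LinearMap.ker ρ) * Nat.card ((N : Submodule R M) →ₗ[R] R) :=
            hsplit2
        _ = Nat.card ((M ⧸ N) →ₗ[R] R) * Nat.card N := by
            rw [Nat.card_congr eker, hNdual]
        _ = Nat.card (M ⧸ N) * Nat.card N := by rw [hQdual]
        _ = Nat.card N * Nat.card (M ⧸ N) := mul_comm _ _
        _ = Nat.card M := hMsplit.symm
        _ = c := hc

end aux

/-- Let `R` be a finite chain ring and let `M` be a finitely generated
`R`-module. Then `|Hom_R(M, R)| = |M|`. -/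
theorem card_dual_eq_card_of_finite_chain_ring
    {R : Type*} [CommRing R] [Finite R] [IsLocalRing R]
    (hchain : (IsLocalRing.maximalIdeal R).IsPrincipal)
    {M : Type*} [AddCommGroup M] [Module R M] [Module.Finite R M] :
    Nat.card (M →ₗ[R] R) = Nat.card M := by
  obtain ⟨p, hp⟩ := hchain.principal
  rw [Ideal.submodule_span_eq] at hp
  have hpmem : p ∈ IsLocalRing.maximalIdeal R := by
    rw [hp]; exact Ideal.mem_span_singleton_self p
  have hnil : ∃ m, p ^ m = 0 := fcr_nilpotent hpmem
  classical
  have hn : p ^ (Nat.find hnil) = 0 := Nat.find_spec hnil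
  have hmin : ∀ m, p ^ m = 0 → Nat.find hnil ≤ m := fun m hm => Nat.find_le hm
  exact fcr_main hp hn hmin (Nat.card M) M rfl
end

section
/- Let R be a finite chain ring, m, n ≥ 1 integers, and let U ⊆ R^m be a free R-submodule. Then the dual of Mat_U(m×n, R) with respect to the trace bilinear form equals Mat_{U^⊥}(m×n, R), i.e. {Y ∈ M_{m,n}(R) : Tr(XYᵀ) = 0 for all X with CS(X) ⊆ U} = {Y ∈ M_{m,n}(R) : CS(Y) ⊆ U^⊥}. -/
open Matrix

/-- The orthogonal complement `U^⊥` of a submodule `U ⊆ R^n` with respect to the standard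
dot product. -/
def perp {R : Type*} [CommRing R] {n : ℕ} (U : Submodule R (Fin n → R)) :
    Submodule R (Fin n → R) where
  carrier := {v | ∀ u ∈ U, u ⬝ᵥ v = 0}
  add_mem' := by
    intro x y hx hy u hu
    simp [dotProduct_add, hx u hu, hy u hu]
  zero_mem' := by
    intro u hu
    simp
  smul_mem' := by
    intro c x hx u hu
    simp [dotProduct_smul, hx u hu]

/-- Let `R` be a finite chain ring, `m, n ≥ 1`, and let `U ⊆ R^m` be a free
`R`-submodule. Then the dual of `Mat_U(m×n, R)` with respect to the trace bilinear form
`b(X,Y) = Tr(XYᵀ)` equals `Mat_{U^⊥}(m×n, R)`: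
`{Y : Tr(XYᵀ) = 0 for all X with CS(X) ⊆ U} = {Y : CS(Y) ⊆ U^⊥}`. -/
theorem traceForm_dual_matColIn
    {R : Type*} [CommRing R] [Finite R] [IsLocalRing R]
    (hchain : (IsLocalRing.maximalIdeal R).IsPrincipal)
    (m n : ℕ) (hm : 1 ≤ m) (hn : 1 ≤ n)
    (U : Submodule R (Fin m → R)) [Module.Free R ↥U] :
    {Y : Matrix (Fin m) (Fin n) R |
        ∀ X : Matrix (Fin m) (Fin n) R, (∀ j, Xᵀ j ∈ U) → Matrix.trace (X * Yᵀ) = 0}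
      = {Y : Matrix (Fin m) (Fin n) R | ∀ j, Yᵀ j ∈ perp U} := by
  ext Y
  simp only [Set.mem_setOf_eq]
  constructor
  · intro hY j u hu
    have h := hY (Matrix.of fun i k => if k = j then u i else 0) ?_
    · have : Matrix.trace ((Matrix.of fun i k => if k = j then u i else 0) * Yᵀ)
          = u ⬝ᵥ Yᵀ j := by
        simp [Matrix.trace, Matrix.diag, Matrix.mul_apply, dotProduct, ite_mul,
          Finset.sum_ite_eq']
      rw [this] at h
      exact h
    · intro k
      by_cases hk : k = j
      · subst hk
        convert hu using 1
        ext i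
        simp
      · convert U.zero_mem
        ext i
        simp [hk]
  · intro hY X hX
    have : Matrix.trace (X * Yᵀ) = ∑ j, (Xᵀ j) ⬝ᵥ (Yᵀ j) := by
      simp only [Matrix.trace, Matrix.diag, Matrix.mul_apply, dotProduct,
        Matrix.transpose_apply]
      rw [Finset.sum_comm]
    rw [this]
    exact Finset.sum_eq_zero fun j _ => hY j (Xᵀ j) (hX j)
end

section
/- Let R be a finite chain ring, m, n ≥ 1 integers, and let U ⊆ R^n be a free R-submodule of rank n − u. Then M_U := {X ∈ M_{m,n}(R) : U ⊆ ker(X)} is a free R-submodule of M_{m,n}(R) of rank u·m. -/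
open Matrix

theorem baer_chain {R : Type*} [CommRing R] [Finite R] [IsLocalRing R]
    (hchain : (IsLocalRing.maximalIdeal R).IsPrincipal) : Module.Baer R R := by
  classical
  obtain ⟨π, hπ⟩ := hchain
  set M := IsLocalRing.maximalIdeal R with hM
  have hπI : M = Ideal.span {π} := hπ
  have hnil : IsNilpotent M := by
    have := IsArtinianRing.isNilpotent_jacobson_bot (R := R)
    rwa [IsLocalRing.jacobson_eq_maximalIdeal ⊥ bot_ne_top] at this
  have hex : ∃ j, M ^ j = ⊥ := hnil
  set e := Nat.find hex with he_def
  have he : M ^ e = ⊥ := Nat.find_spec hex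
  have hlt : ∀ j, j < e → M ^ j ≠ ⊥ := fun j hj => Nat.find_min hex hj
  have hpow : ∀ j, M ^ j = Ideal.span {π ^ j} := by
    intro j; rw [hπI, Ideal.span_singleton_pow]
  have hπe : π ^ e = 0 := by
    have := (hpow e).symm.trans he
    rwa [Ideal.span_singleton_eq_bot] at this
  have hπne : ∀ j, j < e → π ^ j ≠ 0 := by
    intro j hj h0
    exact hlt j hj (by rw [hpow j, h0, Ideal.span_singleton_eq_bot])
  -- structure of nonzero elements
  have hstruct : ∀ x : R, x ≠ 0 → ∃ a, a < e ∧ ∃ c, IsUnit c ∧ x = c * π ^ a := by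
    intro x hx
    have hex2 : ∃ j, x ∉ M ^ j := ⟨e, by rw [he]; simpa using hx⟩
    set j0 := Nat.find hex2 with hj0_def
    have hj0 : x ∉ M ^ j0 := Nat.find_spec hex2
    have hj0pos : j0 ≠ 0 := by
      intro h; apply hj0; rw [h, pow_zero, Ideal.one_eq_top]; exact Submodule.mem_top
    have hamem : x ∈ M ^ (j0 - 1) := by
      have := Nat.find_min hex2 (Nat.sub_lt (Nat.pos_of_ne_zero hj0pos) one_pos)
      simpa using this
    have hanot : x ∉ M ^ (j0 - 1 + 1) := by
      rwa [Nat.sub_add_cancel (Nat.one_le_iff_ne_zero.mpr hj0pos)]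
    set a := j0 - 1 with ha_def
    have ha : a < e := by
      by_contra h
      push_neg at h
      have hle : M ^ a ≤ M ^ e := Ideal.pow_le_pow_right h
      exact hx (by simpa [he] using hle hamem)
    rw [hpow] at hamem
    obtain ⟨c, hc⟩ := Ideal.mem_span_singleton'.mp hamem
    refine ⟨a, ha, c, ?_, hc.symm⟩
    by_contra hcu
    have hcm : c ∈ Ideal.span {π} := hπI ▸ (IsLocalRing.mem_maximalIdeal c).mpr hcu
    obtain ⟨d, hd⟩ := Ideal.mem_span_singleton'.mp hcm
    apply hanot
    rw [hpow]
    exact Ideal.mem_span_singleton'.mpr ⟨d, by rw [← hc, ← hd]; ring⟩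
  -- annihilator
  have hann : ∀ k, k ≤ e → ∀ c : R, π ^ (e - k) * c = 0 → c ∈ Ideal.span {π ^ k} := by
    intro k hk c hc
    rcases eq_or_ne c 0 with rfl | hc0
    · simp
    obtain ⟨a, ha, d, hd, rfl⟩ := hstruct c hc0
    have hz0 : π ^ (e - k + a) * d = 0 := by
      rw [pow_add]; rw [show π ^ (e - k) * π ^ a * d = π ^ (e - k) * (d * π ^ a) by ring]
      exact hc
    have hz : π ^ (e - k + a) = 0 := hd.mul_left_eq_zero.mp hz0
    have hka : k ≤ a := by
      by_contra h
      push_neg at h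
      have : e - k + a < e := by omega
      exact hπne _ this hz
    exact Ideal.mem_span_singleton'.mpr
      ⟨d * π ^ (a - k), by rw [mul_assoc, ← pow_add, Nat.sub_add_cancel hka]⟩
  -- ideal classification
  have hideal : ∀ I : Ideal R, ∃ k, k ≤ e ∧ I = Ideal.span {π ^ k} := by
    intro I
    rcases eq_or_ne I ⊥ with rfl | hI
    · exact ⟨e, le_rfl, by rw [← hpow, he]⟩
    have hex3 : ∃ j, ¬ I ≤ M ^ j := by
      refine ⟨e, ?_⟩
      rw [he]
      intro h
      exact hI (le_bot_iff.mp h)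
    set j0 := Nat.find hex3 with hj0_def
    have hj0 : ¬ I ≤ M ^ j0 := Nat.find_spec hex3
    have hj0pos : j0 ≠ 0 := by
      intro h; apply hj0; rw [h, pow_zero, Ideal.one_eq_top]; exact le_top
    set k := j0 - 1 with hk_def
    have hIk : I ≤ M ^ k := by
      have := Nat.find_min hex3 (m := k) (Nat.sub_lt (Nat.pos_of_ne_zero hj0pos) one_pos)
      simpa using this
    have hInotk1 : ¬ I ≤ M ^ (k + 1) := by
      rwa [hk_def, Nat.sub_add_cancel (Nat.one_le_iff_ne_zero.mpr hj0pos)]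
    have hke : k ≤ e := by
      by_contra h
      push_neg at h
      exact hI (le_bot_iff.mp (he ▸ hIk.trans (Ideal.pow_le_pow_right h.le)))
    obtain ⟨x, hxI, hxk1⟩ := SetLike.not_le_iff_exists.mp hInotk1
    have hx0 : x ≠ 0 := by rintro rfl; exact hxk1 (Submodule.zero_mem _)
    obtain ⟨a, ha, c, hc, rfl⟩ := hstruct x hx0
    have hak : a ≤ k := by
      by_contra h
      push_neg at h
      apply hxk1
      have : c * π ^ a ∈ M ^ a := by
        rw [hpow]
        exact Ideal.mem_span_singleton'.mpr ⟨c, rfl⟩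
      exact Ideal.pow_le_pow_right h this
    have hπaI : π ^ a ∈ I := by
      have : (↑hc.unit⁻¹ : R) * (c * π ^ a) ∈ I := I.mul_mem_left _ hxI
      rwa [← mul_assoc, IsUnit.val_inv_mul, one_mul] at this
    have hπkI : π ^ k ∈ I := by
      have : π ^ (k - a) * π ^ a ∈ I := I.mul_mem_left _ hπaI
      rwa [← pow_add, Nat.sub_add_cancel hak] at this
    refine ⟨k, hke, le_antisymm (hIk.trans (hpow k).le) ?_⟩
    rw [Ideal.span_le]
    simpa using hπkI
  -- Baer criterion
  intro I g
  obtain ⟨k, hk, rfl⟩ := hideal I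
  have hπkI : π ^ k ∈ Ideal.span {π ^ k} := Ideal.mem_span_singleton_self _
  set c := g ⟨π ^ k, hπkI⟩ with hc_def
  have hc : π ^ (e - k) * c = 0 := by
    have h0 : (π ^ (e - k) • (⟨π ^ k, hπkI⟩ : Ideal.span {π ^ k})) = 0 := by
      apply Subtype.ext
      show π ^ (e - k) • π ^ k = 0
      rw [smul_eq_mul, ← pow_add, Nat.sub_add_cancel hk, hπe]
    calc π ^ (e - k) * c = π ^ (e - k) • g ⟨π ^ k, hπkI⟩ := rfl
      _ = g (π ^ (e - k) • ⟨π ^ k, hπkI⟩) := (_root_.map_smul g _ _).symm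
      _ = 0 := by rw [h0, map_zero]
  obtain ⟨d, hd⟩ := Ideal.mem_span_singleton'.mp (hann k hk c hc)
  refine ⟨LinearMap.toSpanSingleton R R d, ?_⟩
  intro x hx
  obtain ⟨s, hs⟩ := Ideal.mem_span_singleton'.mp hx
  have hxs : (⟨x, hx⟩ : Ideal.span {π ^ k}) = s • ⟨π ^ k, hπkI⟩ := by
    apply Subtype.ext
    show x = s • π ^ k
    rw [smul_eq_mul, hs]
  rw [hxs, _root_.map_smul, ← hc_def]
  show x • d = s • c
  simp only [smul_eq_mul]
  rw [← hs, ← hd]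
  ring


/-- `M_U`: the submodule of `m × n` matrices `X` (viewed as linear maps `R^n → R^m`,
`v ↦ Xv`) whose kernel contains the submodule `U ⊆ R^n`. -/
def matKer {R : Type*} [CommRing R] (m n : ℕ) (U : Submodule R (Fin n → R)) :
    Submodule R (Matrix (Fin m) (Fin n) R) where
  carrier := {X | ∀ v ∈ U, X.mulVec v = 0}
  add_mem' := by
    intro X Y hX hY v hv
    simp [Matrix.add_mulVec, hX v hv, hY v hv]
  zero_mem' := by
    intro v hv
    simp
  smul_mem' := by
    intro c X hX v hv
    simp [Matrix.smul_mulVec, hX v hv]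

/-- Let `R` be a finite chain ring, `m, n ≥ 1`, and let `U ⊆ R^n` be a free
`R`-submodule of rank `n − u`. Then `M_U = {X ∈ M_{m,n}(R) : U ⊆ ker X}` is a free
`R`-submodule of `M_{m,n}(R)` of rank `u·m`. -/
theorem matKer_free_and_finrank
    {R : Type*} [CommRing R] [Finite R] [IsLocalRing R]
    (hchain : (IsLocalRing.maximalIdeal R).IsPrincipal)
    (m n : ℕ) (hm : 1 ≤ m) (hn : 1 ≤ n)
    (U : Submodule R (Fin n → R)) [Module.Free R ↥U]
    (u : ℕ) (hun : u ≤ n) (hU : Module.finrank R ↥U = n - u) :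
    Module.Free R ↥(matKer m n U) ∧
      Module.finrank R ↥(matKer m n U) = u * m := by
  classical
  have hBaer := baer_chain hchain
  -- split the inclusion U ↪ R^n using self-injectivity of R
  let b := Module.Free.chooseBasis R ↥U
  let ρ : ↥U ≃ₗ[R] (Module.Free.ChooseBasisIndex R ↥U → R) := b.equivFun
  have hsub : Function.Injective (U.subtype) := Submodule.injective_subtype U
  choose gs hgs using fun i =>
    hBaer.extension_property U.subtype hsub ((LinearMap.proj i) ∘ₗ ρ.toLinearMap)
  let φ : (Fin n → R) →ₗ[R] ↥U := ρ.symm.toLinearMap ∘ₗ LinearMap.pi gs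
  have hφ : ∀ x : ↥U, φ (x : Fin n → R) = x := by
    intro x
    have hpi : LinearMap.pi gs ((x : Fin n → R)) = ρ x := by
      ext i
      have := LinearMap.ext_iff.mp (hgs i) x
      simpa using this
    simp only [φ, LinearMap.comp_apply, hpi]
    simp
  have hcompl : IsCompl U (LinearMap.ker φ) := LinearMap.isCompl_of_proj hφ
  set K := LinearMap.ker φ with hK
  -- K is free
  haveI : Module.Projective R ↥K := by
    refine Module.Projective.of_split K.subtype
      (K.projectionOnto U hcompl.symm) ?_
    ext x
    simp [Submodule.projectionOnto_apply_left]
  haveI : Module.FinitePresentation R ↥K := Module.finitePresentation_of_projective R ↥K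
  haveI : Module.Free R ↥K := Module.free_of_flat_of_isLocalRing
  -- ranks
  have hn' : Module.finrank R (Fin n → R) = n := by
    rw [Module.finrank_pi]; simp
  have hrankK : Module.finrank R ↥K = u := by
    have hprod := (Submodule.prodEquivOfIsCompl U K hcompl).finrank_eq
    rw [Module.finrank_prod, hU, hn'] at hprod
    have hUn : Module.finrank R ↥U ≤ n := by omega
    omega
  -- the quotient
  haveI : Module.Free R ((Fin n → R) ⧸ U) :=
    Module.Free.of_equiv (Submodule.quotientEquivOfIsCompl U K hcompl).symm
  have hrankQ : Module.finrank R ((Fin n → R) ⧸ U) = u := by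
    rw [(Submodule.quotientEquivOfIsCompl U K hcompl).finrank_eq, hrankK]
  -- the linear map Φ : Hom(R^n/U, R^m) → matrices, with range matKer
  let Φ : (((Fin n → R) ⧸ U) →ₗ[R] (Fin m → R)) →ₗ[R] Matrix (Fin m) (Fin n) R :=
    (LinearMap.toMatrix' : ((Fin n → R) →ₗ[R] (Fin m → R)) ≃ₗ[R] Matrix (Fin m) (Fin n) R).toLinearMap ∘ₗ
      LinearMap.lcomp R (Fin m → R) U.mkQ
  have hΦ_apply : ∀ f, Φ f = LinearMap.toMatrix' (f ∘ₗ U.mkQ) := fun f => rfl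
  have hΦinj : Function.Injective Φ := by
    intro f g hfg
    rw [hΦ_apply, hΦ_apply] at hfg
    apply Submodule.linearMap_qext U
    have h2 := congrArg Matrix.toLin' hfg
    rwa [Matrix.toLin'_toMatrix', Matrix.toLin'_toMatrix'] at h2
  have hΦrange : LinearMap.range Φ = matKer m n U := by
    apply le_antisymm
    · rintro X ⟨f, rfl⟩
      intro v hv
      show Matrix.mulVec (LinearMap.toMatrix' (f ∘ₗ U.mkQ)) v = 0
      rw [← Matrix.toLin'_apply, Matrix.toLin'_toMatrix']
      simp [(Submodule.Quotient.mk_eq_zero U).mpr hv]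
    · intro X hX
      have hker : U ≤ LinearMap.ker (Matrix.toLin' X) := by
        intro v hv
        rw [LinearMap.mem_ker, Matrix.toLin'_apply]
        exact hX v hv
      refine ⟨U.liftQ (Matrix.toLin' X) hker, ?_⟩
      rw [hΦ_apply, Submodule.liftQ_mkQ, LinearMap.toMatrix'_toLin']
  let E : (((Fin n → R) ⧸ U) →ₗ[R] (Fin m → R)) ≃ₗ[R] ↥(matKer m n U) :=
    (LinearEquiv.ofInjective Φ hΦinj).trans (LinearEquiv.ofEq _ _ hΦrange)
  constructor
  · exact Module.Free.of_equiv E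
  · rw [← E.finrank_eq, Module.finrank_linearMap, hrankQ, Module.finrank_pi]
    simp
end

section
/- Let R be a finite chain ring, m, n ≥ 1 integers, and let U ⊆ R^n be a free R-submodule. Then {X ∈ M_{m,n}(R) : RS(X) ⊆ U} = {X ∈ M_{m,n}(R) : U^⊥ ⊆ ker(X)}, i.e. the set of matrices whose row space is contained in U equals the set of matrices whose kernel contains U^⊥. -/
open Matrix

theorem mem_of_dot_perp
    {R : Type*} [CommRing R] [Finite R] [IsLocalRing R]
    (hchain : (IsLocalRing.maximalIdeal R).IsPrincipal)
    {n : ℕ} (U : Submodule R (Fin n → R)) [Module.Free R ↥U]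
    (w : Fin n → R) (hw : ∀ v ∈ perp U, w ⬝ᵥ v = 0) : w ∈ U := by
  classical
  set 𝔪 := IsLocalRing.maximalIdeal R with h𝔪
  -- basis of U
  let ι := Module.Free.ChooseBasisIndex R ↥U
  let b : Module.Basis ι R ↥U := Module.Free.chooseBasis R ↥U
  let u : ι → (Fin n → R) := fun i => (b i : Fin n → R)
  have hspan : Submodule.span R (Set.range u) = U := by
    have hu : u = (U.subtype) ∘ b := rfl
    rw [hu, Set.range_comp, ← Submodule.map_span, b.span_eq, Submodule.map_top,
      Submodule.range_subtype]
  have hli : LinearIndependent R u :=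
    b.linearIndependent.map' U.subtype (Submodule.ker_subtype U)
  -- the matrix G and the map φ
  let G : Matrix ι (Fin n) R := Matrix.of u
  let φ : (Fin n → R) →ₗ[R] (ι → R) := G.mulVecLin
  have hker : ∀ v, φ v = 0 → v ∈ perp U := by
    intro v hv x hx
    rw [← hspan] at hx
    induction hx using Submodule.span_induction with
    | mem x hxu =>
      obtain ⟨i, rfl⟩ := hxu
      exact congrFun hv i
    | zero => simp
    | add a c _ _ ha hc => rw [add_dotProduct, ha, hc, add_zero]
    | smul r a _ ha => rw [smul_dotProduct, ha, smul_zero]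
  -- the generator θ of the maximal ideal and its nilpotency
  obtain ⟨θ, hθ⟩ := hchain.principal
  haveI : IsArtinianRing R := isArtinian_of_finite
  have hjac := IsArtinianRing.isNilpotent_jacobson_bot (R := R)
  rw [IsLocalRing.jacobson_eq_maximalIdeal ⊥ bot_ne_top] at hjac
  obtain ⟨N, hN⟩ := hjac
  rw [← h𝔪] at hN
  have hθm : θ ∈ 𝔪 := by rw [hθ]; exact Submodule.mem_span_singleton_self θ
  have hθN : θ ^ N = 0 := by
    have h1 : θ ^ N ∈ 𝔪 ^ N := Ideal.pow_mem_pow hθm N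
    rw [hN] at h1
    simpa using h1
  have hex : ∃ s, θ ^ s = 0 := ⟨N, hθN⟩
  have hs : θ ^ Nat.find hex = 0 := Nat.find_spec hex
  have hspos : Nat.find hex ≠ 0 := by
    intro h
    rw [h, pow_zero] at hs
    exact one_ne_zero hs
  obtain ⟨t, ht⟩ := Nat.exists_eq_succ_of_ne_zero hspos
  have hθt : θ ^ t ≠ 0 := Nat.find_min hex (by omega)
  have hts : θ ^ (t + 1) = 0 := by rw [ht] at hs; exact hs
  -- reduction mod the maximal ideal
  letI : Field (R ⧸ 𝔪) := Ideal.Quotient.field 𝔪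
  let π : R →+* R ⧸ 𝔪 := Ideal.Quotient.mk 𝔪
  let Gbar : Matrix ι (Fin n) (R ⧸ 𝔪) := G.map π
  -- injectivity of the transpose of the reduction
  have hinj : Function.Injective (Gbarᵀ.mulVecLin) := by
    rw [← LinearMap.ker_eq_bot, LinearMap.ker_eq_bot']
    intro cbar hc
    choose c hcπ using fun i => Ideal.Quotient.mk_surjective (I := 𝔪) (cbar i)
    have hcπ' : ∀ i, π (c i) = cbar i := hcπ
    have h1 : ∀ j : Fin n, (∑ i, c i * u i j) ∈ 𝔪 := by
      intro j
      rw [← Ideal.Quotient.eq_zero_iff_mem]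
      have h2 : (Gbarᵀ *ᵥ cbar) j = 0 := by
        rw [← Matrix.mulVecLin_apply, hc]
        rfl
      rw [show (Ideal.Quotient.mk 𝔪) (∑ i, c i * u i j) = π (∑ i, c i * u i j) from rfl, ← h2]
      simp only [Matrix.mulVec, dotProduct, map_sum, _root_.map_mul]
      refine Finset.sum_congr rfl fun i _ => ?_
      rw [hcπ' i, mul_comm]
      rfl
    have h1' : ∀ j : Fin n, ∃ a, a * θ = ∑ i, c i * u i j := by
      intro j
      have hmem : (∑ i, c i * u i j) ∈ Ideal.span {θ} := by
        have h := h1 j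
        rw [hθ] at h
        exact h
      exact Ideal.mem_span_singleton'.mp hmem
    choose wv hwv using h1'
    have h2 : ∑ i, (θ ^ t * c i) • u i = 0 := by
      funext j
      rw [Finset.sum_apply]
      have he : ∀ i ∈ Finset.univ, ((θ ^ t * c i) • u i) j = θ ^ t * (c i * u i j) := by
        intro i _; simp [mul_assoc]
      rw [Finset.sum_congr rfl he, ← Finset.mul_sum, ← hwv j]
      have : θ ^ t * (wv j * θ) = wv j * θ ^ (t + 1) := by ring
      rw [this, hts, mul_zero]
      rfl
    have h3 : ∀ i, θ ^ t * c i = 0 := Fintype.linearIndependent_iff.mp hli _ h2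
    funext i
    rw [show ((0 : ι → R ⧸ 𝔪) i) = 0 from rfl, ← hcπ i, Ideal.Quotient.eq_zero_iff_mem]
    by_contra hcm
    have hcu : IsUnit (c i) := by
      rw [h𝔪, IsLocalRing.mem_maximalIdeal] at hcm
      exact not_not.mp (by simpa [mem_nonunits_iff] using hcm)
    obtain ⟨v, hv⟩ := hcu
    apply hθt
    have := h3 i
    calc θ ^ t = θ ^ t * (c i * ↑v⁻¹) := by rw [← hv, Units.mul_inv, mul_one]
      _ = (θ ^ t * c i) * ↑v⁻¹ := by ring
      _ = 0 := by rw [this, zero_mul]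
  -- surjectivity of the reduced map, by rank over the residue field
  have hsurjbar : Function.Surjective (Gbar.mulVecLin) := by
    rw [← LinearMap.range_eq_top]
    have h1 : Module.finrank (R ⧸ 𝔪) (LinearMap.range Gbarᵀ.mulVecLin) = Fintype.card ι := by
      rw [LinearMap.finrank_range_of_inj hinj, Module.finrank_pi]
    have h2 : Gbar.rank = Fintype.card ι := by
      rw [← Matrix.rank_transpose]
      exact h1
    apply Submodule.eq_top_of_finrank_eq
    rw [Module.finrank_pi]
    exact h2
  -- Nakayama: surjectivity of φ
  have hstep : (⊤ : Submodule R (ι → R)) ≤ LinearMap.range φ ⊔ 𝔪 • ⊤ := by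
    intro y _
    obtain ⟨xbar, hx⟩ := hsurjbar (fun i => π (y i))
    choose x hxπ using fun j => Ideal.Quotient.mk_surjective (I := 𝔪) (xbar j)
    have hmem : ∀ i, (y i - (G.mulVec x) i) ∈ 𝔪 := by
      intro i
      rw [← Ideal.Quotient.eq_zero_iff_mem]
      have hxπ' : ∀ j, π (x j) = xbar j := hxπ
      have hπ : π ((G.mulVec x) i) = Gbar.mulVecLin xbar i := by
        rw [Matrix.mulVecLin_apply]
        simp only [Matrix.mulVec, dotProduct, map_sum, _root_.map_mul]
        refine Finset.sum_congr rfl fun j _ => ?_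
        rw [hxπ' j]
        rfl
      have hy' : Gbar.mulVecLin xbar i = π (y i) := congrFun hx i
      rw [map_sub, hπ, hy', sub_self]
    have hsm : y - G.mulVec x ∈ 𝔪 • (⊤ : Submodule R (ι → R)) := by
      have hrep : (y - G.mulVec x) = ∑ i, (y i - G.mulVec x i) • (Pi.single i 1 : ι → R) := by
        funext k
        rw [Finset.sum_apply]
        have he : ∀ i ∈ Finset.univ,
            ((y i - G.mulVec x i) • (Pi.single i 1 : ι → R)) k
              = if i = k then (y i - G.mulVec x i) else 0 := by
          intro i _
          by_cases h : i = k <;> simp [h, Pi.single_apply]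
        rw [Finset.sum_congr rfl he, Finset.sum_ite_eq' Finset.univ k _]
        simp
      rw [hrep]
      exact Submodule.sum_mem _ fun i _ =>
        Submodule.smul_mem_smul (hmem i) Submodule.mem_top
    refine Submodule.mem_sup.mpr ⟨G.mulVec x, ⟨x, rfl⟩, y - G.mulVec x, hsm, by abel⟩
  have hind : ∀ k, (⊤ : Submodule R (ι → R)) ≤ LinearMap.range φ ⊔ (𝔪 ^ k) • ⊤ := by
    intro k
    induction k with
    | zero =>
      rw [pow_zero, Ideal.one_eq_top, Submodule.top_smul]
      exact le_sup_right
    | succ k ih =>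
      refine le_trans ih ?_
      refine sup_le le_sup_left ?_
      have h1 : (𝔪 ^ k) • (⊤ : Submodule R (ι → R))
          ≤ (𝔪 ^ k) • (LinearMap.range φ ⊔ 𝔪 • ⊤) := smul_mono_right _ hstep
      refine le_trans h1 ?_
      rw [Submodule.smul_sup]
      refine sup_le (le_trans (Submodule.smul_le_right) le_sup_left) ?_
      have h2 : (𝔪 ^ k) • (𝔪 • (⊤ : Submodule R (ι → R))) = (𝔪 ^ (k + 1)) • ⊤ := by
        rw [← Submodule.smul_assoc, smul_eq_mul, ← pow_succ]
      rw [h2]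
      exact le_sup_right
  have hNtop : LinearMap.range φ = ⊤ := by
    have h1 := hind N
    rw [hN] at h1
    rw [show ((0 : Ideal R) • (⊤ : Submodule R (ι → R))) = ⊥ from Submodule.bot_smul _] at h1
    rw [sup_bot_eq] at h1
    exact top_le_iff.mp h1
  obtain ⟨ψ, hψ⟩ := LinearMap.exists_rightInverse_of_surjective φ hNtop
  have hwk : ∀ z : Fin n → R, w ⬝ᵥ z = w ⬝ᵥ (ψ (φ z)) := by
    intro z
    have hk : φ (z - ψ (φ z)) = 0 := by
      rw [map_sub]
      have h2 : φ (ψ (φ z)) = φ z := LinearMap.congr_fun hψ (φ z)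
      rw [h2, sub_self]
    have h3 := hw _ (hker _ hk)
    rw [dotProduct_sub] at h3
    exact (sub_eq_zero.mp h3).symm.symm
  have hfinal : w = ∑ i, (w ⬝ᵥ ψ (Pi.single i 1)) • u i := by
    funext j
    have h1 : w j = w ⬝ᵥ Pi.single j (1 : R) := by rw [dotProduct_single, mul_one]
    have h2 : φ (Pi.single j 1) = ∑ i, u i j • (Pi.single i 1 : ι → R) := by
      funext k
      rw [Finset.sum_apply]
      have he : ∀ i ∈ Finset.univ,
          (u i j • (Pi.single i 1 : ι → R)) k = if i = k then u i j else 0 := by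
        intro i _
        by_cases h : i = k <;> simp [h, Pi.single_apply]
      rw [Finset.sum_congr rfl he, Finset.sum_ite_eq' Finset.univ k _]
      simp only [Finset.mem_univ, if_true]
      show (G *ᵥ Pi.single j 1) k = u k j
      rw [Matrix.mulVec_single]
      show G k j * 1 = u k j
      rw [mul_one]
      rfl
    have h4 : w ⬝ᵥ (∑ i, u i j • ψ (Pi.single i 1 : ι → R))
        = ∑ i, u i j * (w ⬝ᵥ ψ (Pi.single i 1)) := by
      simp only [dotProduct, Finset.sum_apply, Pi.smul_apply, smul_eq_mul, Finset.mul_sum]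
      rw [Finset.sum_comm]
      refine Finset.sum_congr rfl fun i _ => Finset.sum_congr rfl fun k _ => by ring
    have h5 : ψ (φ (Pi.single j 1)) = ∑ i, u i j • ψ (Pi.single i 1 : ι → R) := by
      rw [h2, map_sum]
      exact Finset.sum_congr rfl fun i _ => map_smul ψ _ _
    rw [h1, hwk, h5, h4, Finset.sum_apply]
    refine Finset.sum_congr rfl fun i _ => ?_
    simp [mul_comm]
  have hmem : (∑ i, (w ⬝ᵥ ψ (Pi.single i 1)) • u i) ∈ Submodule.span R (Set.range u) :=
    Submodule.sum_mem _ fun i _ =>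
      Submodule.smul_mem _ _ (Submodule.subset_span ⟨i, rfl⟩)
  rw [hspan] at hmem
  rw [hfinal]
  exact hmem

/-- Let `R` be a finite chain ring, `m, n ≥ 1`, and let `U ⊆ R^n` be a free
`R`-submodule. Then the set of `m × n` matrices whose row space is contained in `U` equals
the set of `m × n` matrices whose kernel contains `U^⊥`:
`{X : RS(X) ⊆ U} = {X : U^⊥ ⊆ ker X}`. -/
theorem rowSpace_subset_iff_perp_subset_ker
    {R : Type*} [CommRing R] [Finite R] [IsLocalRing R]
    (hchain : (IsLocalRing.maximalIdeal R).IsPrincipal)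
    (m n : ℕ) (hm : 1 ≤ m) (hn : 1 ≤ n)
    (U : Submodule R (Fin n → R)) [Module.Free R ↥U] :
    {X : Matrix (Fin m) (Fin n) R | ∀ i, X i ∈ U}
      = {X : Matrix (Fin m) (Fin n) R | ∀ v ∈ perp U, X.mulVec v = 0} := by
  ext X
  simp only [Set.mem_setOf_eq]
  constructor
  · intro h v hv
    funext i
    exact hv (X i) (h i)
  · intro h i
    refine mem_of_dot_perp hchain U (X i) fun v hv => ?_
    exact congrFun (h v hv) i
end

section
/- Let R be a finite chain ring, let C ⊆ M_{m,n}(R) be a code (a free R-submodule), and let U ⊆ R^n be a free R-submodule of rank n − u. Then |C_U| · |R|^{m(n−u)} = |C| · |(C^⊥)_{U^⊥}|, where C_U := {X ∈ C : U ⊆ ker(X)} and (C^⊥)_{U^⊥} := {Y ∈ C^⊥ : U^⊥ ⊆ ker(Y)}. -/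
noncomputable section

open scoped DirectSum

namespace ChainProof

abbrev QQ := AddCircle (1 : ℚ)

def theta (k : ℕ) : ZMod k →+ QQ :=
  ZMod.lift k ⟨(QuotientAddGroup.mk' (AddSubgroup.zmultiples (1:ℚ))).comp
      (zmultiplesHom ℚ ((k:ℚ)⁻¹)), by
    simp only [AddMonoidHom.comp_apply, zmultiplesHom_apply]
    by_cases hk : (k:ℚ) = 0
    · simp [hk]
    · have : ((k:ℤ) • ((k:ℚ)⁻¹) : ℚ) = 1 := by
        rw [zsmul_eq_mul, Int.cast_natCast, mul_inv_cancel₀ hk]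
      rw [this]
      simpa using (AddCircle.coe_eq_zero_iff (1:ℚ)).mpr ⟨1, by simp⟩⟩

lemma theta_coe (k : ℕ) (j : ℤ) :
    theta k (j : ZMod k) = ((j • ((k:ℚ)⁻¹) : ℚ) : QQ) :=
  ZMod.lift_coe _ _ _

lemma theta_eq_zero_iff (k : ℕ) (hk : 0 < k) (j : ℤ) :
    theta k (j : ZMod k) = 0 ↔ (j : ZMod k) = 0 := by
  rw [theta_coe, ZMod.intCast_zmod_eq_zero_iff_dvd]
  have hk' : (k:ℚ) ≠ 0 := by exact_mod_cast hk.ne'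
  rw [AddCircle.coe_eq_zero_iff]
  constructor
  · rintro ⟨z, hz⟩
    refine ⟨z, ?_⟩
    have : (z : ℚ) = j • (k:ℚ)⁻¹ := by simpa using hz
    have : (z : ℚ) * k = j := by
      rw [this, zsmul_eq_mul, inv_mul_cancel_right₀ hk']
    have h2 : (k:ℚ) * z = j := by linarith
    exact_mod_cast h2.symm
  · rintro ⟨z, rfl⟩
    refine ⟨z, ?_⟩
    push_cast
    rw [zsmul_eq_mul, zsmul_eq_mul]
    push_cast
    field_simp

lemma zmod_hom_ext {k : ℕ} {A : Type*} [AddCommGroup A] (f g : ZMod k →+ A)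
    (h : f 1 = g 1) : f = g := by
  ext y
  obtain ⟨j, rfl⟩ := ZMod.intCast_surjective y
  rw [show ((j : ZMod k)) = j • (1 : ZMod k) from (zsmul_one j).symm, map_zsmul, map_zsmul, h]

def Phi (k : ℕ) : ZMod k → (ZMod k →+ QQ) := fun x => (theta k).comp (AddMonoidHom.mulLeft x)

lemma Phi_apply (k : ℕ) (x y : ZMod k) : Phi k x y = theta k (x * y) := rfl

lemma Phi_bijective (k : ℕ) (hk : 0 < k) : Function.Bijective (Phi k) := by
  constructor
  · intro x y h
    have h1 : theta k x = theta k y := by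
      simpa [Phi_apply] using congrArg (fun f : ZMod k →+ QQ => f 1) h
    obtain ⟨j, hj⟩ := ZMod.intCast_surjective (x - y)
    have h0 : theta k (x - y) = 0 := by rw [map_sub, h1, sub_self]
    rw [← hj] at h0
    have h2 := (theta_eq_zero_iff k hk j).mp h0
    rw [h2] at hj
    exact sub_eq_zero.mp hj.symm
  · intro ψ
    obtain ⟨a, ha⟩ := QuotientAddGroup.mk_surjective (ψ 1)
    have hq : (k:ℤ) • ψ 1 = 0 := by
      rw [← map_zsmul, zsmul_one]
      simp
    rw [← ha] at hq
    have : ((((k:ℤ) • a : ℚ)) : QQ) = 0 := by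
      rw [AddCircle.coe_zsmul]; exact hq
    obtain ⟨z, hz⟩ := (AddCircle.coe_eq_zero_iff (1:ℚ)).mp this
    refine ⟨(z : ZMod k), zmod_hom_ext _ _ ?_⟩
    have hk' : (k:ℚ) ≠ 0 := by exact_mod_cast hk.ne'
    have haz : a = z • ((k:ℚ)⁻¹) := by
      have : (z : ℚ) = k * a := by simpa using hz
      rw [zsmul_eq_mul, this, mul_comm _ ((k:ℚ)⁻¹), inv_mul_cancel_left₀ hk']
    rw [Phi_apply, mul_one]
    rw [theta_coe k z, ← haz, ha]

lemma charEquiv (A : Type*) [AddCommGroup A] [Finite A] : Nonempty ((A →+ QQ) ≃ A) := by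
  classical
  obtain ⟨ι, inst, n, hn, ⟨e⟩⟩ := AddCommGroup.equiv_directSum_zmod_of_finite' A
  let E1 : (A →+ QQ) ≃ ((⨁ i, ZMod (n i)) →+ QQ) :=
    { toFun := fun f => f.comp e.symm.toAddMonoidHom
      invFun := fun g => g.comp e.toAddMonoidHom
      left_inv := fun f => by ext a; simp
      right_inv := fun g => by ext a; simp }
  let E2 : ((⨁ i, ZMod (n i)) →+ QQ) ≃ (Π i, ZMod (n i) →+ QQ) :=
    (DFinsupp.liftAddHom (β := fun i => ZMod (n i)) (γ := QQ)).toEquiv.symm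
  let E3 : (Π i, ZMod (n i) →+ QQ) ≃ (Π i, ZMod (n i)) :=
    Equiv.piCongrRight fun i =>
      (Equiv.ofBijective _ (Phi_bijective (n i) (Nat.lt_of_lt_of_le Nat.zero_lt_one (hn i).le))).symm
  let E4 : (Π i, ZMod (n i)) ≃ (⨁ i, ZMod (n i)) := DFinsupp.equivFunOnFintype.symm
  exact ⟨E1.trans (E2.trans (E3.trans (E4.trans e.symm.toEquiv)))⟩

lemma finite_char (A : Type*) [AddCommGroup A] [Finite A] : Finite (A →+ QQ) :=
  Finite.of_equiv A (charEquiv A).some.symm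

lemma card_char (A : Type*) [AddCommGroup A] [Finite A] : Nat.card (A →+ QQ) = Nat.card A :=
  Nat.card_congr (charEquiv A).some

section Chain
variable {R : Type*} [CommRing R] [IsLocalRing R] [Finite R]

lemma exists_min (hchain : (IsLocalRing.maximalIdeal R).IsPrincipal) :
    ∃ s : R, s ≠ 0 ∧ ∀ x : R, x ≠ 0 → ∃ t : R, s = t * x := by
  classical
  obtain ⟨π, hπ⟩ := hchain
  have hπmem : π ∈ IsLocalRing.maximalIdeal R := by
    rw [hπ]; exact Submodule.mem_span_singleton_self π
  have key : ∀ i j : ℕ, i < j → π ^ i = π ^ j → π ^ i = 0 := by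
    intro i j hlt hpow
    have h0 : π ^ i * (1 - π ^ (j - i)) = 0 := by
      rw [mul_sub, mul_one, ← pow_add, Nat.add_sub_cancel' hlt.le, hpow, sub_self]
    have hmem : π ^ (j - i) ∈ IsLocalRing.maximalIdeal R := by
      have h1 : 1 ≤ j - i := by omega
      have h2 : π ^ (j - i) = π ^ (j - i - 1) * π := by
        rw [← pow_succ, Nat.sub_add_cancel h1]
      rw [h2]
      exact Ideal.mul_mem_left _ _ hπmem
    obtain ⟨u, hu⟩ : IsUnit (1 - π ^ (j - i)) :=
      IsLocalRing.isUnit_one_sub_self_of_mem_nonunits _ hmem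
    have := congrArg (fun y => y * (↑u⁻¹ : R)) h0
    simpa [← hu, mul_assoc] using this
  have hnil : ∃ e : ℕ, π ^ e = 0 := by
    obtain ⟨i, j, hij, hpow⟩ := Finite.exists_ne_map_eq_of_infinite (fun k : ℕ => π ^ k)
    rcases lt_trichotomy i j with h | h | h
    · exact ⟨i, key i j h hpow⟩
    · exact absurd h hij
    · exact ⟨j, key j i h hpow.symm⟩
  set e := Nat.find hnil with he
  have hee : π ^ e = 0 := Nat.find_spec hnil
  have he1 : 1 ≤ e := by
    rcases Nat.eq_zero_or_pos e with h | h
    · rw [h, pow_zero] at hee; exact absurd hee one_ne_zero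
    · exact h
  refine ⟨π ^ (e - 1), ?_, ?_⟩
  · exact Nat.find_min hnil (by omega)
  · intro x hx
    have hP : ∃ j : ℕ, ¬∃ c : R, c * π ^ (j + 1) = x := by
      refine ⟨e - 1, ?_⟩
      rintro ⟨c, hc⟩
      rw [Nat.sub_add_cancel he1, hee, mul_zero] at hc
      exact hx hc.symm
    set k := Nat.find hP with hk
    have hku : ¬∃ c : R, c * π ^ (k + 1) = x := Nat.find_spec hP
    have hxk : ∃ c : R, c * π ^ k = x := by
      rcases Nat.eq_zero_or_pos k with h | h
      · exact ⟨x, by rw [h, pow_zero, mul_one]⟩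
      · have := Nat.find_min hP (m := k - 1) (by omega)
        push_neg at this
        simpa [Nat.sub_add_cancel h] using this
    obtain ⟨c, hc⟩ := hxk
    have hcu : IsUnit c := by
      by_contra hcu
      have hcm : c ∈ IsLocalRing.maximalIdeal R := hcu
      rw [hπ, Submodule.mem_span_singleton] at hcm
      obtain ⟨d, hd⟩ := hcm
      rw [smul_eq_mul] at hd
      refine hku ⟨d, ?_⟩
      rw [pow_succ, ← mul_assoc]
      rw [← hc, ← hd]
      ring
    have hke : k < e := by
      by_contra hke
      push_neg at hke
      have : π ^ k = 0 := by
        calc π ^ k = π ^ e * π ^ (k - e) := by rw [← pow_add, Nat.add_sub_cancel' hke]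
          _ = 0 := by rw [hee, zero_mul]
      exact hx (by rw [← hc, this, mul_zero])
    obtain ⟨u, hu⟩ := hcu
    refine ⟨π ^ (e - 1 - k) * ↑u⁻¹, ?_⟩
    have hπk : π ^ k = ↑u⁻¹ * x := by
      rw [← hc, ← hu, ← mul_assoc]
      simp
    calc π ^ (e - 1) = π ^ (e - 1 - k) * π ^ k := by
          rw [← pow_add, Nat.sub_add_cancel (by omega)]
      _ = π ^ (e - 1 - k) * (↑u⁻¹ * x) := by rw [hπk]
      _ = π ^ (e - 1 - k) * ↑u⁻¹ * x := by ring

end Chain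

section Dperp
open Matrix
variable {R : Type*} [CommRing R] {ι : Type*} [Fintype ι]

/-- perp wrt the dot product on `ι → R`. -/
def dperp (D : Submodule R (ι → R)) : Submodule R (ι → R) where
  carrier := {v | ∀ d ∈ D, v ⬝ᵥ d = 0}
  add_mem' := by
    intro x y hx hy d hd
    simp [add_dotProduct, hx d hd, hy d hd]
  zero_mem' := by intro d hd; simp
  smul_mem' := by
    intro c x hx d hd
    simp [smul_dotProduct, hx d hd]

lemma mem_dperp {D : Submodule R (ι → R)} {v : ι → R} :
    v ∈ dperp D ↔ ∀ d ∈ D, v ⬝ᵥ d = 0 := Iff.rfl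


end Dperp

section Dual
open Matrix
variable {R : Type*} [CommRing R] [IsLocalRing R] [Finite R]

lemma exists_good_char (hchain : (IsLocalRing.maximalIdeal R).IsPrincipal) :
    ∃ χ : R →+ QQ, ∀ r : R, (∀ t : R, χ (t * r) = 0) → r = 0 := by
  obtain ⟨s, hs0, hs⟩ := exists_min hchain
  obtain ⟨c, hc⟩ := CharacterModule.exists_character_apply_ne_zero_of_ne_zero hs0
  refine ⟨c, ?_⟩
  intro r hr
  by_contra hr0
  obtain ⟨t, ht⟩ := hs r hr0
  exact hc (by rw [ht]; exact hr t)

variable {ι : Type*} [Fintype ι] [DecidableEq ι]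

variable {χ : R →+ QQ} (hχ : ∀ r : R, (∀ t : R, χ (t * r) = 0) → r = 0)

include hχ

lemma sep (v : ι → R) (h : ∀ w : ι → R, χ (v ⬝ᵥ w) = 0) : v = 0 := by
  funext i
  refine hχ (v i) fun t => ?_
  have := h (Pi.single i t)
  rwa [dotProduct_single, mul_comm] at this

lemma dual_count (D : Submodule R (ι → R)) :
    Nat.card D * Nat.card (dperp D) = Nat.card (ι → R) := by
  haveI : Finite ((ι → R) →+ QQ) := finite_char _
  haveI : Finite (↥D →+ QQ) := finite_char _
  -- the pairing map into the character group
  let E : (ι → R) →+ ((ι → R) →+ QQ) :=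
    AddMonoidHom.mk' (fun v => χ.comp (AddMonoidHom.mk' (fun w => v ⬝ᵥ w)
        (fun w₁ w₂ => by simp [dotProduct_add])))
      (fun v₁ v₂ => by ext w; simp [add_dotProduct])
  have E_apply : ∀ v w, E v w = χ (v ⬝ᵥ w) := fun _ _ => rfl
  have E_inj : Function.Injective E := by
    rw [injective_iff_map_eq_zero]
    intro v hv
    exact sep hχ v fun w => by rw [← E_apply, hv]; rfl
  have E_bij : Function.Bijective E :=
    (Nat.bijective_iff_injective_and_card E).mpr ⟨E_inj, (card_char _).symm⟩
  let F : (ι → R) →+ (↥D →+ QQ) :=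
    AddMonoidHom.mk' (fun v => χ.comp (AddMonoidHom.mk' (fun d : D => v ⬝ᵥ (d : ι → R))
        (fun d₁ d₂ => by simp [dotProduct_add])))
      (fun v₁ v₂ => by ext d; simp [add_dotProduct])
  have F_apply : ∀ v (d : D), F v d = χ (v ⬝ᵥ (d : ι → R)) := fun _ _ => rfl
  have F_surj : Function.Surjective F := by
    intro ψ
    obtain ⟨ψ', hψ'⟩ :=
      CharacterModule.dual_surjective_of_injective D.subtype (Submodule.injective_subtype D)
        ψ
    obtain ⟨v, hv⟩ := E_bij.2 ψ'
    refine ⟨v, ?_⟩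
    ext d
    rw [F_apply, ← E_apply, hv, ← hψ']
    rfl
  have hker : ((F.ker : Set (ι → R))) = ((dperp D : Set (ι → R))) := by
    ext v
    simp only [SetLike.mem_coe, AddMonoidHom.mem_ker]
    constructor
    · intro hv d hd
      refine hχ _ fun t => ?_
      have h0 : F v ⟨t • d, D.smul_mem t hd⟩ = 0 := by rw [hv]; rfl
      rw [F_apply] at h0
      have h2 : v ⬝ᵥ (t • d) = t * (v ⬝ᵥ d) := by
        rw [dotProduct_smul, smul_eq_mul]
      rwa [h2] at h0
    · intro hv
      ext d
      rw [F_apply, hv d d.2]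
      simp
  have lag := AddSubgroup.card_eq_card_quotient_mul_card_addSubgroup F.ker
  have hquot : Nat.card ((ι → R) ⧸ F.ker) = Nat.card (↥D →+ QQ) :=
    Nat.card_congr (QuotientAddGroup.quotientKerEquivOfSurjective F F_surj).toEquiv
  have hkercard : Nat.card F.ker = Nat.card (dperp D) :=
    Nat.card_congr (Equiv.setCongr hker)
  rw [lag, hquot, hkercard, card_char]

end Dual

section Corollaries
open Matrix

lemma submodule_eq_of_le_of_card_le {R M : Type*} [Ring R] [AddCommGroup M] [Module R M]
    [Finite M] {p q : Submodule R M} (h : p ≤ q) (hc : Nat.card q ≤ Nat.card p) : p = q := by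
  apply SetLike.coe_injective
  apply Set.eq_of_subset_of_ncard_le h ?_ (Set.toFinite _)
  rwa [← Nat.card_coe_set_eq, ← Nat.card_coe_set_eq]

lemma card_free {R M : Type*} [CommRing R] [Nontrivial R] [Finite R] [AddCommGroup M]
    [Module R M] [Finite M] [Module.Free R M] :
    Nat.card M = Nat.card R ^ Module.finrank R M := by
  classical
  let b := Module.Free.chooseBasis R M
  rw [Module.finrank_eq_card_chooseBasisIndex]
  have e := b.equivFun
  rw [Nat.card_congr e.toEquiv, Nat.card_fun]
  congr 1
  exact Nat.card_eq_fintype_card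

end Corollaries

section More
open Matrix
variable {R : Type*} [CommRing R]

lemma card_map_equiv {M N : Type*} [AddCommGroup M] [AddCommGroup N] [Module R M] [Module R N]
    (e : M ≃ₗ[R] N) (p : Submodule R M) :
    Nat.card (Submodule.map (e : M →ₗ[R] N) p) = Nat.card p :=
  Nat.card_congr (Submodule.equivMapOfInjective _ e.injective p).symm.toEquiv

lemma card_inf_sup {M : Type*} [AddCommGroup M] [Module R M] [Finite M]
    (p p' : Submodule R M) :
    Nat.card ↥(p ⊓ p') * Nat.card ↥(p ⊔ p') = Nat.card ↥p * Nat.card ↥p' := by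
  have h1 := Submodule.card_eq_card_quotient_mul_card (Submodule.comap p.subtype (p ⊓ p'))
  have h2 := Submodule.card_eq_card_quotient_mul_card
    (Submodule.comap (p ⊔ p').subtype p')
  have e1 : Nat.card (Submodule.comap p.subtype (p ⊓ p')) = Nat.card ↥(p ⊓ p') :=
    Nat.card_congr (Submodule.comapSubtypeEquivOfLe inf_le_left).toEquiv
  have e2 : Nat.card (Submodule.comap (p ⊔ p').subtype p') = Nat.card ↥p' :=
    Nat.card_congr (Submodule.comapSubtypeEquivOfLe le_sup_right).toEquiv
  have e3 : Nat.card (↥p ⧸ Submodule.comap p.subtype (p ⊓ p'))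
      = Nat.card (↥(p ⊔ p') ⧸ Submodule.comap (p ⊔ p').subtype p') :=
    Nat.card_congr (LinearMap.quotientInfEquivSupQuotient p p').toEquiv
  rw [h1, h2, e1, e2, e3]
  ring

variable {ι : Type*} [Fintype ι] [DecidableEq ι]

lemma dperp_sup (p p' : Submodule R (ι → R)) :
    dperp (p ⊔ p') = dperp p ⊓ dperp p' := by
  ext v
  simp only [mem_dperp, Submodule.mem_inf]
  constructor
  · intro h
    exact ⟨fun d hd => h d (Submodule.mem_sup_left hd),
      fun d hd => h d (Submodule.mem_sup_right hd)⟩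
  · rintro ⟨h1, h2⟩ d hd
    obtain ⟨a, ha, b, hb, rfl⟩ := Submodule.mem_sup.mp hd
    rw [dotProduct_add, h1 a ha, h2 b hb, add_zero]

end More

end ChainProof

open Matrix

/-- The dual code `C^⊥` of `C ⊆ M_{m,n}(R)` with respect to the trace bilinear form
`b(X,Y) = Tr(XYᵀ)`. -/
def dualCode {R : Type*} [CommRing R] {m n : ℕ}
    (C : Submodule R (Matrix (Fin m) (Fin n) R)) :
    Submodule R (Matrix (Fin m) (Fin n) R) where
  carrier := {Y | ∀ X ∈ C, Matrix.trace (X * Yᵀ) = 0}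
  add_mem' := by
    intro Y Z hY hZ X hX
    simp [Matrix.transpose_add, Matrix.mul_add, hY X hX, hZ X hX]
  zero_mem' := by
    intro X hX
    simp
  smul_mem' := by
    intro c Y hY X hX
    simp [Matrix.transpose_smul, Matrix.mul_smul, hY X hX]

namespace ChainProof

variable {R : Type*} [CommRing R] {m n : ℕ}

def matEquiv (R : Type*) [CommRing R] (m n : ℕ) :
    Matrix (Fin m) (Fin n) R ≃ₗ[R] (Fin m × Fin n → R) where
  toFun X p := X p.1 p.2
  map_add' _ _ := rfl
  map_smul' _ _ := rfl
  invFun f := Matrix.of fun i j => f (i, j)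
  left_inv _ := rfl
  right_inv _ := rfl

lemma pair_eq (X Y : Matrix (Fin m) (Fin n) R) :
    Matrix.trace (X * Yᵀ) = matEquiv R m n X ⬝ᵥ matEquiv R m n Y := by
  simp [Matrix.trace, Matrix.diag, Matrix.mul_apply, dotProduct,
    Fintype.sum_prod_type, Matrix.transpose_apply, matEquiv]
  rfl

lemma pair_rows (X Y : Matrix (Fin m) (Fin n) R) :
    matEquiv R m n X ⬝ᵥ matEquiv R m n Y = ∑ i, X i ⬝ᵥ Y i := by
  simp [dotProduct, Fintype.sum_prod_type, matEquiv]
  rfl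

lemma mem_matKer {U : Submodule R (Fin n → R)} {X : Matrix (Fin m) (Fin n) R} :
    X ∈ matKer m n U ↔ ∀ v ∈ U, X.mulVec v = 0 := Iff.rfl

lemma mem_perp {U : Submodule R (Fin n → R)} {v : Fin n → R} :
    v ∈ perp U ↔ ∀ u ∈ U, u ⬝ᵥ v = 0 := Iff.rfl

lemma perp_eq_dperp (U : Submodule R (Fin n → R)) : perp U = dperp U := by
  ext v
  simp only [mem_perp, mem_dperp]
  constructor
  · intro h d hd; rw [dotProduct_comm]; exact h d hd
  · intro h d hd; rw [dotProduct_comm]; exact h d hd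

lemma map_dualCode (C : Submodule R (Matrix (Fin m) (Fin n) R)) :
    Submodule.map (matEquiv R m n).toLinearMap (dualCode C)
      = dperp (Submodule.map (matEquiv R m n).toLinearMap C) := by
  ext v
  rw [Submodule.mem_map_equiv, mem_dperp]
  constructor
  · intro hY d hd
    obtain ⟨X, hX, rfl⟩ := hd
    have := hY X hX
    rw [pair_eq, LinearEquiv.apply_symm_apply] at this
    rw [show (matEquiv R m n).toLinearMap X = matEquiv R m n X from rfl, dotProduct_comm]
    exact this
  · intro hv X hX
    rw [pair_eq, LinearEquiv.apply_symm_apply, dotProduct_comm]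
    have := hv _ (Submodule.mem_map_of_mem (f := (matEquiv R m n).toLinearMap) hX)
    exact this

lemma map_matKer_perp (U : Submodule R (Fin n → R)) :
    Submodule.map (matEquiv R m n).toLinearMap (matKer m n (perp U))
      = dperp (Submodule.map (matEquiv R m n).toLinearMap (matKer m n U)) := by
  classical
  ext v
  rw [Submodule.mem_map_equiv, mem_dperp]
  constructor
  · intro h d hd
    obtain ⟨X, hX, rfl⟩ := hd
    rw [show (matEquiv R m n).toLinearMap X = matEquiv R m n X from rfl]
    rw [show v = matEquiv R m n ((matEquiv R m n).symm v) from
      (LinearEquiv.apply_symm_apply _ _).symm, pair_rows]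
    apply Finset.sum_eq_zero
    intro i _
    have hXi : X i ∈ perp U := by
      intro u hu
      have := congrFun (hX u hu) i
      rw [dotProduct_comm]
      exact this
    exact congrFun (h (X i) hXi) i
  · intro h u hu
    funext i
    show (matEquiv R m n).symm v i ⬝ᵥ u = 0
    have hX : (Pi.single i u : Matrix (Fin m) (Fin n) R) ∈ matKer m n U := by
      intro w hw
      funext i'
      show (Pi.single i u : Fin m → Fin n → R) i' ⬝ᵥ w = 0
      rcases eq_or_ne i' i with rfl | hne
      · rw [Pi.single_eq_same, dotProduct_comm]
        exact hu w hw
      · rw [Pi.single_eq_of_ne hne]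
        exact zero_dotProduct w
    have h0 := h ((matEquiv R m n).toLinearMap (Pi.single i u)) (Submodule.mem_map_of_mem hX)
    rw [show (matEquiv R m n).toLinearMap (Pi.single i u) = matEquiv R m n (Pi.single i u) from rfl,
      show v = matEquiv R m n ((matEquiv R m n).symm v) from
      (LinearEquiv.apply_symm_apply _ _).symm] at h0
    erw [pair_rows] at h0
    rwa [Finset.sum_eq_single i
      (fun b _ hb => by
        rw [show (Pi.single i u : Fin m → Fin n → R) b = 0 from by rw [Pi.single_eq_of_ne hb],
          dotProduct_zero])
      (fun hi => absurd (Finset.mem_univ i) hi), Pi.single_eq_same] at h0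

lemma card_matKer (V : Submodule R (Fin n → R)) [Finite R] :
    Nat.card (matKer m n V) = Nat.card (dperp V) ^ m := by
  have e : ↥(matKer m n V) ≃ (Fin m → ↥(dperp V)) :=
    { toFun := fun X i => ⟨X.1 i, fun v hv => congrFun (X.2 v hv) i⟩
      invFun := fun f => ⟨fun i => (f i : Fin n → R), fun v hv => funext fun i => (f i).2 v hv⟩
      left_inv := fun X => rfl
      right_inv := fun f => rfl }
  rw [Nat.card_congr e, Nat.card_fun]
  congr 1
  simp

end ChainProof


/-- Let `R` be a finite chain ring, `C ⊆ M_{m,n}(R)` a code (a free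
`R`-submodule), and `U ⊆ R^n` a free `R`-submodule of rank `n − u`. Then
`|C_U| · |R|^{m(n−u)} = |C| · |(C^⊥)_{U^⊥}|`, where the shortening `D_V` of a code `D` by a
submodule `V ⊆ R^n` is `{X ∈ D : V ⊆ ker X}`. -/
theorem card_shortening_mul
    {R : Type*} [CommRing R] [Finite R] [IsLocalRing R]
    (hchain : (IsLocalRing.maximalIdeal R).IsPrincipal)
    (m n : ℕ) (hm : 1 ≤ m) (hn : 1 ≤ n)
    (C : Submodule R (Matrix (Fin m) (Fin n) R)) [Module.Free R ↥C]
    (U : Submodule R (Fin n → R)) [Module.Free R ↥U]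
    (u : ℕ) (hun : u ≤ n) (hU : Module.finrank R ↥U = n - u) :
    Nat.card ↥(C ⊓ matKer m n U) * Nat.card R ^ (m * (n - u))
      = Nat.card ↥C * Nat.card ↥(dualCode C ⊓ matKer m n (perp U)) := by
  classical
  obtain ⟨χ, hχ⟩ := ChainProof.exists_good_char hchain
  set q := Nat.card R with hq
  have hq0 : 0 < q := Nat.card_pos
  set T := (ChainProof.matEquiv R m n).toLinearMap with hT
  have hinj : Function.Injective T := (ChainProof.matEquiv R m n).injective
  set A := Submodule.map T C with hA'
  set B := Submodule.map T (matKer m n U) with hB'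
  have hA : Nat.card A = Nat.card C := ChainProof.card_map_equiv (ChainProof.matEquiv R m n) C
  have hB : Nat.card B = Nat.card (matKer m n U) := ChainProof.card_map_equiv (ChainProof.matEquiv R m n) _
  -- cardinality of U and its perp
  have hfulln : Nat.card (Fin n → R) = q ^ n := by
    rw [Nat.card_fun]
    congr 1
    simp [Nat.card_eq_fintype_card]
  have hUcard : Nat.card U = q ^ (n - u) := by
    rw [ChainProof.card_free (R := R), hU]
  have hdU : Nat.card (ChainProof.dperp U) = q ^ u := by
    have h1 : q ^ (n - u) * Nat.card (ChainProof.dperp U) = q ^ n := by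
      rw [← hUcard, ChainProof.dual_count hχ U, hfulln]
    have h2 : q ^ (n - u) * q ^ u = q ^ n := by
      rw [← pow_add]
      congr 1
      omega
    exact Nat.eq_of_mul_eq_mul_left (pow_pos hq0 _) (h1.trans h2.symm)
  have hWcard : Nat.card (matKer m n U) = q ^ (m * u) := by
    rw [ChainProof.card_matKer U, hdU, ← pow_mul, Nat.mul_comm u m]
  -- the big duality
  have hfullmn : Nat.card (Fin m × Fin n → R) = q ^ (m * n) := by
    rw [Nat.card_fun]
    congr 1
    simp [Nat.card_eq_fintype_card]
  have hdcount : Nat.card ↥(A ⊔ B) * Nat.card ↥(ChainProof.dperp (A ⊔ B)) = q ^ (m * n) := by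
    rw [ChainProof.dual_count hχ (A ⊔ B), hfullmn]
  have hsecond := ChainProof.card_inf_sup A B
  have hk1 : Nat.card ↥(C ⊓ matKer m n U) = Nat.card ↥(A ⊓ B) := by
    rw [← Submodule.map_inf T hinj]
    exact (ChainProof.card_map_equiv (ChainProof.matEquiv R m n) _).symm
  have hk2 : Nat.card ↥(dualCode C ⊓ matKer m n (perp U)) = Nat.card ↥(ChainProof.dperp (A ⊔ B)) := by
    have hmap : Submodule.map T (dualCode C ⊓ matKer m n (perp U)) = ChainProof.dperp (A ⊔ B) := by
      rw [Submodule.map_inf T hinj]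
      rw [hT, hA', hB', ChainProof.map_dualCode C, ChainProof.map_matKer_perp U, ← ChainProof.dperp_sup]
    rw [← hmap]
    exact (ChainProof.card_map_equiv (ChainProof.matEquiv R m n) _).symm
  rw [hk1, hk2]
  haveI : Nonempty ↥(A ⊔ B) := ⟨0⟩
  have hs0 : 0 < Nat.card ↥(A ⊔ B) := Nat.card_pos
  apply Nat.eq_of_mul_eq_mul_right hs0
  calc Nat.card ↥(A ⊓ B) * q ^ (m * (n - u)) * Nat.card ↥(A ⊔ B)
      = (Nat.card ↥(A ⊓ B) * Nat.card ↥(A ⊔ B)) * q ^ (m * (n - u)) := by ring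
    _ = (Nat.card ↥A * Nat.card ↥B) * q ^ (m * (n - u)) := by rw [hsecond]
    _ = Nat.card ↥C * (q ^ (m * u) * q ^ (m * (n - u))) := by rw [hA, hB, hWcard]; ring
    _ = Nat.card ↥C * q ^ (m * n) := by
        rw [← pow_add]
        congr 2
        have : m * u + m * (n - u) = m * (u + (n - u)) := by ring
        rw [this, Nat.add_sub_cancel' hun]
    _ = Nat.card ↥C * (Nat.card ↥(A ⊔ B) * Nat.card ↥(ChainProof.dperp (A ⊔ B))) := by rw [hdcount]
    _ = Nat.card ↥C * Nat.card ↥(ChainProof.dperp (A ⊔ B)) * Nat.card ↥(A ⊔ B) := by ring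
end
end

section
/- Let R be a finite chain ring, let k ≥ 1 and 0 ≤ t ≤ s ≤ k be integers, and let X ⊆ R^k be a free R-submodule of rank t. Then the number of free R-submodules U ⊆ R^k with X ⊆ U and rank(U) = s equals N(k−t, s−t), the number of free R-submodules of rank s−t of R^{k−t}. -/
open Submodule

section Helpers
variable {R : Type*} [CommRing R] {M : Type*} [AddCommGroup M] [Module R M]

/-- Sup of disjoint submodules is equivalent to the product. -/
noncomputable def supEquivProd (p q : Submodule R M) (h : Disjoint p q) :
    (p × q) ≃ₗ[R] ↥(p ⊔ q) := by
  have hinj : Function.Injective (p.subtype.coprod q.subtype) := by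
    rw [← LinearMap.ker_eq_bot, eq_bot_iff]
    rintro ⟨x, y⟩ hxy
    simp only [LinearMap.mem_ker, LinearMap.coprod_apply, coe_subtype] at hxy
    have hx : (x : M) ∈ p ⊓ q := ⟨x.2, by
      have : (x : M) = -(y : M) := by rw [eq_neg_iff_add_eq_zero]; exact hxy
      rw [this]; exact neg_mem y.2⟩
    rw [h.eq_bot] at hx
    have hx0 : (x : M) = 0 := hx
    have hy0 : (y : M) = 0 := by rw [hx0, zero_add] at hxy; exact hxy
    refine Prod.ext (Subtype.ext hx0) (Subtype.ext hy0)
  exact (LinearEquiv.ofInjective _ hinj).trans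
    (LinearEquiv.ofEq _ _ (by rw [LinearMap.range_coprod, range_subtype, range_subtype]))
end Helpers

section Helpers2
variable {R : Type*} [CommRing R] {M : Type*} [AddCommGroup M] [Module R M]

theorem isCompl_comap_of_disjoint (p q : Submodule R M) (h : Disjoint p q) :
    IsCompl (comap (p ⊔ q).subtype p) (comap (p ⊔ q).subtype q) := by
  constructor
  · rw [disjoint_iff, eq_bot_iff]
    rintro x ⟨hx1, hx2⟩
    have : (x : M) ∈ p ⊓ q := ⟨hx1, hx2⟩
    rw [h.eq_bot] at this
    exact Subtype.ext this
  · rw [codisjoint_iff, eq_top_iff]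
    rintro ⟨x, hx⟩ -
    obtain ⟨a, ha, b, hb, rfl⟩ := mem_sup.mp hx
    have hmem : ∀ z ∈ p ⊔ q, z ∈ p ⊔ q := fun z hz => hz
    refine mem_sup.mpr ⟨⟨a, le_sup_left (a := p) (b := q) ha⟩, ?_, ⟨b, le_sup_right (a := p) (b := q) hb⟩, ?_, rfl⟩
    · exact ha
    · exact hb

/-- A complemented submodule of a projective module is projective. -/
theorem projective_of_isCompl [Module.Projective R M] (p q : Submodule R M) (h : IsCompl p q) :
    Module.Projective R ↥q :=
  Module.Projective.of_split q.subtype (Submodule.linearProjOfIsCompl q p h.symm)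
    (Submodule.linearProjOfIsCompl_comp_subtype h.symm)

theorem finrank_add_finrank_of_isCompl [StrongRankCondition R] [Module.Finite R M]
    (p q : Submodule R M) (h : IsCompl p q)
    [Module.Free R ↥p] [Module.Free R ↥q] [Module.Finite R ↥p] [Module.Finite R ↥q] :
    Module.finrank R ↥p + Module.finrank R ↥q = Module.finrank R M := by
  rw [← Module.finrank_prod, (Submodule.prodEquivOfIsCompl p q h).finrank_eq]
end Helpers2

section FiniteLocal
variable {R : Type*} [CommRing R] [Finite R] [IsLocalRing R]

theorem free_of_projective_of_finite {M : Type*} [AddCommGroup M] [Module R M]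
    [Module.Finite R M] [Module.Projective R M] : Module.Free R M := by
  have : IsNoetherianRing R := isNoetherianRing_iff.mpr inferInstance
  have : Module.FinitePresentation R M := Module.finitePresentation_of_finite R M
  exact Module.free_of_flat_of_isLocalRing

theorem isNilpotent_of_mem_maximalIdeal {π : R} (hπ : π ∈ IsLocalRing.maximalIdeal R) :
    IsNilpotent π := by
  obtain ⟨a, b, hab, h⟩ := Finite.exists_ne_map_eq_of_infinite (fun n : ℕ => π ^ n)
  wlog hlt : a < b generalizing a b
  · exact this b a hab.symm h.symm (by omega)
  have key : π ^ a * (1 - π ^ (b - a)) = 0 := by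
    rw [mul_sub, mul_one, ← pow_add]
    rw [show a + (b - a) = b by omega]
    rw [h]; ring
  have hunit : IsUnit (1 - π ^ (b - a)) := by
    refine IsLocalRing.isUnit_one_sub_self_of_mem_nonunits _ ?_
    have : π ^ (b - a) ∈ IsLocalRing.maximalIdeal R := by
      have : b - a = (b - a - 1) + 1 := by omega
      rw [this, pow_succ]
      exact Ideal.mul_mem_left _ _ hπ
    exact this
  exact ⟨a, by
    have := hunit.unit.isUnit
    obtain ⟨u, hu⟩ := hunit
    have : π ^ a * (u * ↑u⁻¹) = 0 := by rw [← mul_assoc, hu, key, zero_mul]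
    simpa using this⟩
end FiniteLocal

section Unimodular
variable {R : Type*} [CommRing R] [Finite R] [IsLocalRing R]

theorem exists_functional (hchain : (IsLocalRing.maximalIdeal R).IsPrincipal)
    {M : Type*} [AddCommGroup M] [Module R M] [Module.Free R M] [Module.Finite R M]
    {x : M} (hreg : ∀ r : R, r • x = 0 → r = 0) :
    ∃ f : M →ₗ[R] R, f x = 1 := by
  obtain ⟨π, hπ⟩ := hchain
  have hπm : π ∈ IsLocalRing.maximalIdeal R := by rw [hπ]; exact mem_span_singleton_self π
  set c := Module.Free.chooseBasis R M with hc
  -- claim: some coordinate is a unit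
  have hexists : ∃ i, IsUnit (c.repr x i) := by
    by_contra hno
    push_neg at hno
    -- every coordinate lies in the maximal ideal, hence is a multiple of π
    have hmem : ∀ i, c.repr x i ∈ IsLocalRing.maximalIdeal R := fun i =>
      (IsLocalRing.mem_maximalIdeal _).mpr (hno i)
    have hdiv : ∀ i, ∃ r : R, c.repr x i = π * r := by
      intro i
      have := hmem i
      rw [hπ, Submodule.mem_span_singleton] at this
      obtain ⟨r, hr⟩ := this
      exact ⟨r, by rw [← hr]; rw [smul_eq_mul]; ring⟩
    choose r hr using hdiv
    have hx : x = π • (∑ i, r i • c i) := by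
      conv_lhs => rw [← c.sum_repr x]
      rw [Finset.smul_sum]
      refine Finset.sum_congr rfl fun i _ => ?_
      rw [hr i, smul_smul]
    -- π is nilpotent
    have hnil : IsNilpotent π := isNilpotent_of_mem_maximalIdeal hπm
    have h0 : (0 : R) ≠ 1 := zero_ne_one
    have hex : ∃ n, π ^ n = 0 := hnil
    classical
    set e := Nat.find hex with he
    have hee : π ^ e = 0 := Nat.find_spec hex
    have hpos : 1 ≤ e := by
      rcases Nat.eq_zero_or_pos e with h | h
      · rw [h, pow_zero] at hee; exact absurd hee one_ne_zero
      · exact h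
    have hne : π ^ (e - 1) ≠ 0 := Nat.find_min hex (by omega)
    have : π ^ (e - 1) • x = 0 := by
      rw [hx, smul_smul, ← pow_succ, show e - 1 + 1 = e by omega, hee, zero_smul]
    exact hne (hreg _ this)
  obtain ⟨i, hu⟩ := hexists
  obtain ⟨u, hu'⟩ := hu
  refine ⟨((u⁻¹ : Rˣ) : R) • c.coord i, ?_⟩
  simp only [LinearMap.smul_apply, Module.Basis.coord_apply, smul_eq_mul]
  rw [← hu', Units.inv_mul]
end Unimodular

section Compl
variable {R : Type*} [CommRing R] [Finite R] [IsLocalRing R]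

/-- The span of a "regular" element is free of rank 1. -/
noncomputable def spanSingletonEquiv {M : Type*} [AddCommGroup M] [Module R M]
    {x : M} (hreg : ∀ r : R, r • x = 0 → r = 0) : R ≃ₗ[R] ↥(span R {x}) := by
  have hinj : Function.Injective (LinearMap.toSpanSingleton R M x) := by
    rw [← LinearMap.ker_eq_bot, eq_bot_iff]
    intro r hr
    exact hreg r hr
  exact (LinearEquiv.ofInjective _ hinj).trans
    (LinearEquiv.ofEq _ _ (LinearMap.span_singleton_eq_range R M x).symm)

theorem eq_bot_of_free_finrank_zero {M : Type*} [AddCommGroup M] [Module R M]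
    (N : Submodule R M) [Module.Free R ↥N] [Module.Finite R ↥N]
    (h : Module.finrank R ↥N = 0) : N = ⊥ := by
  have hcard := (Module.finrank_eq_card_chooseBasisIndex R ↥N).symm.trans h
  have hempty : IsEmpty (Module.Free.ChooseBasisIndex R ↥N) := by
    rwa [Fintype.card_eq_zero_iff] at hcard
  have b := Module.Free.chooseBasis R ↥N
  rw [eq_bot_iff]
  intro z hz
  have : (⟨z, hz⟩ : ↥N) = 0 := by
    exact b.repr.injective (Subsingleton.elim _ _)
  exact congrArg Subtype.val this

theorem exists_isCompl_of_free (hchain : (IsLocalRing.maximalIdeal R).IsPrincipal) (n : ℕ) :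
    ∀ {M : Type*} [AddCommGroup M] [Module R M] [Module.Free R M] [Module.Finite R M]
      (N : Submodule R M), Module.Free R ↥N → Module.finrank R ↥N = n →
      ∃ P : Submodule R M, IsCompl N P := by
  induction n with
  | zero =>
    intro M _ _ _ _ N hfree hrank
    have : Finite M := Module.finite_of_finite R
    have := hfree
    rw [eq_bot_of_free_finrank_zero N hrank]
    exact ⟨⊤, isCompl_bot_top⟩
  | succ t ih =>
    intro M _ _ _ _ N hfree hrank
    have : Finite M := Module.finite_of_finite R
    have hNfree := hfree
    -- choose a basis of N indexed by Fin (t+1)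
    have hcard : Fintype.card (Module.Free.ChooseBasisIndex R ↥N) = t + 1 := by
      rw [← Module.finrank_eq_card_chooseBasisIndex, hrank]
    let b : Module.Basis (Fin (t + 1)) R ↥N :=
      (Module.Free.chooseBasis R ↥N).reindex (Fintype.equivFinOfCardEq hcard)
    set x : M := ↑(b 0) with hx
    have hxN : x ∈ N := (b 0).2
    -- x is regular
    have hreg : ∀ r : R, r • x = 0 → r = 0 := by
      intro r hr
      have h1 : r • (b 0) = 0 := by
        apply Subtype.ext
        show r • x = (0 : M)
        exact hr
      have h2 : b.repr (r • b 0) 0 = 0 := by rw [h1]; simp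
      rw [map_smul, b.repr_self, Finsupp.smul_apply, Finsupp.single_eq_same,
        smul_eq_mul, mul_one] at h2
      exact h2
    obtain ⟨f, hf⟩ := exists_functional hchain hreg
    -- the projection onto span x
    set g : M →ₗ[R] ↥(span R {x}) :=
      (LinearMap.toSpanSingleton R ↥(span R {x}) ⟨x, mem_span_singleton_self x⟩).comp f with hg
    have hproj : ∀ z : ↥(span R {x}), g z = z := by
      rintro ⟨z, hz⟩
      obtain ⟨r, rfl⟩ := mem_span_singleton.mp hz
      apply Subtype.ext
      show f (r • x) • x = r • x
      rw [map_smul, smul_eq_mul, hf, mul_one]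
    have hcompl : IsCompl (span R {x}) (LinearMap.ker g) := LinearMap.isCompl_of_proj hproj
    set K := LinearMap.ker g with hK
    -- instances for K
    have hKproj : Module.Projective R ↥K := projective_of_isCompl _ _ hcompl
    have hKfree : Module.Free R ↥K := free_of_projective_of_finite
    -- N = span x ⊔ (N ⊓ K)
    have hspanN : span R {x} ≤ N := span_le.mpr (by simpa using hxN)
    have hNsplit : N = span R {x} ⊔ (N ⊓ K) := by
      have h1 : (span R {x} ⊔ K) ⊓ N = span R {x} ⊔ (K ⊓ N) :=
        sup_inf_assoc_of_le K hspanN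
      rw [hcompl.sup_eq_top, top_inf_eq] at h1
      rw [inf_comm N K]
      exact h1
    set N' := N ⊓ K with hN'
    have hdisj : Disjoint (span R {x}) N' :=
      hcompl.disjoint.mono_right inf_le_right
    -- N ≃ span x × N'
    have hsupN : span R {x} ⊔ N' = N := hNsplit.symm
    let E : (↥(span R {x}) × ↥N') ≃ₗ[R] ↥N :=
      (supEquivProd _ _ hdisj).trans (LinearEquiv.ofEq _ _ hsupN)
    -- N' is projective, hence free
    have hEincl : ∀ z : ↥N', E (0, z) = Submodule.inclusion inf_le_left z := by
      intro z
      apply Subtype.ext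
      show ((0 : ↥(span R {x})) : M) + (z : M) = (z : M)
      rw [ZeroMemClass.coe_zero, zero_add]
    have hN'proj : Module.Projective R ↥N' := by
      refine Module.Projective.of_split (M := ↥N)
        (Submodule.inclusion inf_le_left)
        ((LinearMap.snd R _ _).comp E.symm.toLinearMap) ?_
      ext z
      have : E.symm (Submodule.inclusion inf_le_left z) = (0, z) := by
        rw [← hEincl z, LinearEquiv.symm_apply_apply]
      simp [this]
    have hN'free : Module.Free R ↥N' := free_of_projective_of_finite
    -- finrank N' = t
    have hspanfree : Module.Free R ↥(span R {x}) := Module.Free.of_equiv (spanSingletonEquiv hreg)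
    have hrank1 : Module.finrank R ↥(span R {x}) = 1 := by
      rw [← (spanSingletonEquiv hreg).finrank_eq, Module.finrank_self]
    have hrankN' : Module.finrank R ↥N' = t := by
      have h1 : Module.finrank R (↥(span R {x}) × ↥N') = t + 1 := by
        rw [E.finrank_eq, hrank]
      rw [Module.finrank_prod, hrank1] at h1
      omega
    -- transfer N' to a submodule of K
    have hN'K : N' ≤ K := inf_le_right
    set N'' := comap K.subtype N' with hN''
    let e : ↥N'' ≃ₗ[R] ↥N' := Submodule.comapSubtypeEquivOfLe hN'K
    have hN''free : Module.Free R ↥N'' := Module.Free.of_equiv e.symm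
    have hN''rank : Module.finrank R ↥N'' = t := by rw [e.finrank_eq, hrankN']
    obtain ⟨P'', hP''⟩ := ih N'' hN''free hN''rank
    refine ⟨map K.subtype P'', ?_, ?_⟩
    · -- disjoint
      rw [disjoint_iff, eq_bot_iff]
      rintro z ⟨hzN, hzP⟩
      obtain ⟨w, hwP, rfl⟩ := hzP
      have hwN'' : w ∈ N'' := by
        show (w : M) ∈ N'
        exact ⟨hzN, w.2⟩
      have : w ∈ N'' ⊓ P'' := ⟨hwN'', hwP⟩
      rw [hP''.inf_eq_bot] at this
      rw [this]
      rfl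
    · -- codisjoint
      rw [codisjoint_iff, eq_top_iff]
      have hmapN'' : map K.subtype N'' = N' := by
        rw [hN'', map_comap_subtype, inf_eq_right.mpr hN'K]
      have hsup : N ⊔ map K.subtype P'' = span R {x} ⊔ (N' ⊔ map K.subtype P'') := by
        rw [hNsplit, sup_assoc]
      rw [hsup, ← hmapN'', ← Submodule.map_sup, hP''.sup_eq_top, Submodule.map_top,
        range_subtype]
      rw [hcompl.sup_eq_top]
end Compl

section Main
variable {R : Type*} [CommRing R] [Finite R] [IsLocalRing R]
variable {M M₂ : Type*} [AddCommGroup M] [Module R M] [AddCommGroup M₂] [Module R M₂]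

theorem forward_transfer (hchain : (IsLocalRing.maximalIdeal R).IsPrincipal)
    [Module.Free R M] [Module.Finite R M]
    (ψ : M →ₗ[R] M₂) (X : Submodule R M) (hker : LinearMap.ker ψ = X)
    (hXfree : Module.Free R ↥X) {t s : ℕ} (hXrank : Module.finrank R ↥X = t)
    (U : Submodule R M) (hfree : Module.Free R ↥U) (hXU : X ≤ U)
    (hrank : Module.finrank R ↥U = s) :
    Module.Free R ↥(U.map ψ) ∧ Module.finrank R ↥(U.map ψ) = s - t := by
  have : Finite M := Module.finite_of_finite R
  set X' := comap U.subtype X with hX'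
  let e' : ↥X' ≃ₗ[R] ↥X := Submodule.comapSubtypeEquivOfLe hXU
  have hX'free : Module.Free R ↥X' := Module.Free.of_equiv e'.symm
  have hX'rank : Module.finrank R ↥X' = t := by rw [e'.finrank_eq, hXrank]
  obtain ⟨Z', hZ'⟩ := exists_isCompl_of_free hchain t (M := ↥U) X' hX'free hX'rank
  have hZ'proj : Module.Projective R ↥Z' := projective_of_isCompl _ _ hZ'
  have hZ'free : Module.Free R ↥Z' := free_of_projective_of_finite
  have hZ'rank : Module.finrank R ↥Z' = s - t := by
    have h := finrank_add_finrank_of_isCompl X' Z' hZ'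
    rw [hX'rank, hrank] at h
    omega
  set Z := map U.subtype Z' with hZ
  let eZ : ↥Z' ≃ₗ[R] ↥Z := Submodule.equivSubtypeMap U Z'
  -- U = X ⊔ Z
  have hmapX' : map U.subtype X' = X := by
    rw [hX', map_comap_subtype, inf_eq_right.mpr hXU]
  have hUsplit : X ⊔ Z = U := by
    rw [← hmapX', hZ, ← Submodule.map_sup, hZ'.sup_eq_top, Submodule.map_top, range_subtype]
  have hdisjXZ : X ⊓ Z = ⊥ := by
    rw [← hmapX', hZ, ← Submodule.map_inf _ (Subtype.val_injective), hZ'.inf_eq_bot,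
      Submodule.map_bot]
  -- map ψ U = map ψ Z
  have hmapXbot : map ψ X = ⊥ := by
    rw [eq_bot_iff]
    rintro _ ⟨z, hz, rfl⟩
    have : z ∈ LinearMap.ker ψ := hker ▸ hz
    simpa using this
  have hmapU : map ψ U = map ψ Z := by
    rw [← hUsplit, Submodule.map_sup, hmapXbot, bot_sup_eq]
  -- ψ is injective on Z
  have hinjZ : Function.Injective (ψ.comp Z.subtype) := by
    rw [← LinearMap.ker_eq_bot, eq_bot_iff]
    intro z hz
    have h1 : (z : M) ∈ LinearMap.ker ψ := hz
    have h2 : (z : M) ∈ X ⊓ Z := ⟨hker ▸ h1, z.2⟩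
    rw [hdisjXZ] at h2
    exact Subtype.ext h2
  let eq2 : ↥Z ≃ₗ[R] ↥(map ψ Z) :=
    (LinearEquiv.ofInjective _ hinjZ).trans
      (LinearEquiv.ofEq _ _ (by rw [LinearMap.range_comp, range_subtype]))
  have hfree2 : Module.Free R ↥(map ψ Z) :=
    Module.Free.of_equiv (eZ.trans eq2)
  have hrank2 : Module.finrank R ↥(map ψ Z) = s - t := by
    rw [← (eZ.trans eq2).finrank_eq, hZ'rank]
  rw [hmapU]
  exact ⟨hfree2, hrank2⟩

theorem backward_transfer [Module.Finite R M]
    (ψ : M →ₗ[R] M₂) (σ : M₂ →ₗ[R] M) (hψσ : ∀ w, ψ (σ w) = w)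
    (hσ : Function.Injective σ)
    (X : Submodule R M) (hker : LinearMap.ker ψ = X)
    (hXfree : Module.Free R ↥X) {t s : ℕ} (hXrank : Module.finrank R ↥X = t)
    (hts : t ≤ s)
    (W : Submodule R M₂) (hWfree : Module.Free R ↥W)
    (hWrank : Module.finrank R ↥W = s - t) :
    Module.Free R ↥(W.comap ψ) ∧ X ≤ W.comap ψ ∧ Module.finrank R ↥(W.comap ψ) = s := by
  have : Finite M := Module.finite_of_finite R
  set Z := map σ W with hZ
  let eZ : ↥W ≃ₗ[R] ↥Z := Submodule.equivMapOfInjective σ hσ W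
  have hZfree : Module.Free R ↥Z := Module.Free.of_equiv eZ
  have hZrank : Module.finrank R ↥Z = s - t := by rw [← eZ.finrank_eq, hWrank]
  have hXle : X ≤ W.comap ψ := by
    intro z hz
    have : ψ z = 0 := by rw [← hker] at hz; exact hz
    show ψ z ∈ W
    rw [this]; exact zero_mem W
  have hdisj : Disjoint X Z := by
    rw [disjoint_iff, eq_bot_iff]
    rintro z ⟨hzX, hzZ⟩
    obtain ⟨w, hw, rfl⟩ := hzZ
    have h1 : ψ (σ w) = 0 := by rw [← hker] at hzX; exact hzX
    rw [hψσ] at h1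
    rw [h1, map_zero]
    rfl
  have hsplit : X ⊔ Z = W.comap ψ := by
    apply le_antisymm
    · refine sup_le hXle ?_
      rintro _ ⟨w, hw, rfl⟩
      show ψ (σ w) ∈ W
      rw [hψσ]; exact hw
    · intro u hu
      have huW : ψ u ∈ W := hu
      refine mem_sup.mpr ⟨u - σ (ψ u), ?_, σ (ψ u), ⟨ψ u, huW, rfl⟩, sub_add_cancel u (σ (ψ u))⟩
      rw [← hker]
      show ψ (u - σ (ψ u)) = 0
      rw [map_sub, hψσ, sub_self]
  let E : (↥X × ↥Z) ≃ₗ[R] ↥(W.comap ψ) :=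
    (supEquivProd X Z hdisj).trans (LinearEquiv.ofEq _ _ hsplit)
  have hfreeU : Module.Free R ↥(W.comap ψ) := Module.Free.of_equiv E
  have hrankU : Module.finrank R ↥(W.comap ψ) = s := by
    rw [← E.finrank_eq, Module.finrank_prod, hXrank, hZrank]
    omega
  exact ⟨hfreeU, hXle, hrankU⟩
end Main

/-- `N(a, b)`: the number of free `R`-submodules of `R^a` of rank `b`. -/
noncomputable def numFree (R : Type*) [CommRing R] (a b : ℕ) : ℕ :=
  Nat.card {W : Submodule R (Fin a → R) // Module.Free R ↥W ∧ Module.finrank R ↥W = b}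

/-- Let `R` be a finite chain ring, `k ≥ 1`, `0 ≤ t ≤ s ≤ k`, and let
`X ⊆ R^k` be a free `R`-submodule of rank `t`. Then the number of free `R`-submodules
`U ⊆ R^k` with `X ⊆ U` and `rank U = s` equals `N(k−t, s−t)`, the number of free
`R`-submodules of `R^{k−t}` of rank `s − t`. -/
theorem card_free_submodules_containing
    {R : Type*} [CommRing R] [Finite R] [IsLocalRing R]
    (hchain : (IsLocalRing.maximalIdeal R).IsPrincipal)
    (k t s : ℕ) (hk : 1 ≤ k) (hts : t ≤ s) (hsk : s ≤ k)
    (X : Submodule R (Fin k → R)) [Module.Free R ↥X]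
    (hX : Module.finrank R ↥X = t) :
    Nat.card {U : Submodule R (Fin k → R) //
        Module.Free R ↥U ∧ X ≤ U ∧ Module.finrank R ↥U = s}
      = numFree R (k - t) (s - t) := by
  classical
  obtain ⟨Y, hY⟩ := exists_isCompl_of_free hchain t X ‹Module.Free R ↥X› hX
  have hYproj : Module.Projective R ↥Y := projective_of_isCompl X Y hY
  have hYfree : Module.Free R ↥Y := free_of_projective_of_finite
  have hYrank : Module.finrank R ↥Y = k - t := by
    have h := finrank_add_finrank_of_isCompl X Y hY
    rw [hX, Module.finrank_fin_fun] at h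
    omega
  have hcard : Fintype.card (Module.Free.ChooseBasisIndex R ↥Y) = k - t := by
    rw [← Module.finrank_eq_card_chooseBasisIndex, hYrank]
  let bY : Module.Basis (Fin (k - t)) R ↥Y :=
    (Module.Free.chooseBasis R ↥Y).reindex (Fintype.equivFinOfCardEq hcard)
  let φ : ↥Y ≃ₗ[R] (Fin (k - t) → R) := bY.equivFun
  let pr : (Fin k → R) →ₗ[R] ↥Y := Y.projectionOnto X hY.symm
  let ψ : (Fin k → R) →ₗ[R] (Fin (k - t) → R) := φ.toLinearMap ∘ₗ pr
  have hker : LinearMap.ker ψ = X := by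
    show LinearMap.ker (φ.toLinearMap ∘ₗ pr) = X
    rw [LinearMap.ker_comp, LinearEquiv.ker, Submodule.comap_bot,
      Submodule.ker_projectionOnto]
  let σ : (Fin (k - t) → R) →ₗ[R] (Fin k → R) := Y.subtype ∘ₗ φ.symm.toLinearMap
  have hψσ : ∀ w, ψ (σ w) = w := by
    intro w
    show φ (pr ↑(φ.symm w)) = w
    rw [Submodule.projectionOnto_apply_left, LinearEquiv.apply_symm_apply]
  have hσ : Function.Injective σ := by
    intro a b hab
    apply φ.symm.injective
    apply Subtype.val_injective
    exact hab
  have hrange : LinearMap.range ψ = ⊤ := by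
    show LinearMap.range (φ.toLinearMap ∘ₗ pr) = ⊤
    rw [LinearMap.range_comp, Submodule.range_projectionOnto, Submodule.map_top,
      LinearEquiv.range]
  rw [numFree]
  refine Nat.card_congr ?_
  refine
    { toFun := fun U =>
        ⟨U.1.map ψ,
          (forward_transfer hchain ψ X hker ‹Module.Free R ↥X› hX U.1 U.2.1 U.2.2.1 U.2.2.2).1,
          (forward_transfer hchain ψ X hker ‹Module.Free R ↥X› hX U.1 U.2.1 U.2.2.1 U.2.2.2).2⟩
      invFun := fun W =>
        ⟨W.1.comap ψ,
          (backward_transfer ψ σ hψσ hσ X hker ‹Module.Free R ↥X› hX hts W.1 W.2.1 W.2.2).1,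
          (backward_transfer ψ σ hψσ hσ X hker ‹Module.Free R ↥X› hX hts W.1 W.2.1 W.2.2).2.1,
          (backward_transfer ψ σ hψσ hσ X hker ‹Module.Free R ↥X› hX hts W.1 W.2.1 W.2.2).2.2⟩
      left_inv := ?_
      right_inv := ?_ }
  · rintro ⟨U, hUfree, hXU, hUrank⟩
    apply Subtype.ext
    show Submodule.comap ψ (Submodule.map ψ U) = U
    rw [Submodule.comap_map_eq, hker, sup_eq_left.mpr hXU]
  · rintro ⟨W, hWfree, hWrank⟩
    apply Subtype.ext
    show Submodule.map ψ (Submodule.comap ψ W) = W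
    rw [Submodule.map_comap_eq, hrange, top_inf_eq]
end

section
/- Let R be a finite chain ring, let m ≤ n, and let C ⊆ M_{m,n}(R) be a code (a free R-submodule) with 0 < rank(C) < mn and minimum rank distance d := min{rank(X) : X ∈ C, X ≠ 0}. If C is MRD, i.e. |C| = |R|^{m(n−d+1)}, then every nonzero matrix Y ∈ C^⊥ satisfies rank(Y) ≥ n − d + 2. -/
open Matrix

/-- The rank of a matrix over `R`: the minimal number of generators of its column space
`CS(X) = span of the columns of X`. -/
noncomputable def matRank {R : Type*} [CommRing R] {m n : ℕ}
    (X : Matrix (Fin m) (Fin n) R) : ℕ :=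
  sInf {r : ℕ | ∃ s : Finset (Fin m → R), s.card = r ∧
    Submodule.span R (s : Set (Fin m → R)) = Submodule.span R (Set.range Xᵀ)}

section ChainHelpers

open scoped Classical

variable {R : Type*} [CommRing R]

/-- largest `t ≤ e` with `π ^ t ∣ a`. -/
noncomputable def ordf (π : R) (e : ℕ) (a : R) : ℕ :=
  Nat.findGreatest (fun t => π ^ t ∣ a) e

lemma ordf_dvd (π : R) (e : ℕ) (a : R) : π ^ ordf π e a ∣ a :=
  Nat.findGreatest_spec (P := fun t => π ^ t ∣ a) (Nat.zero_le e) (show π ^ 0 ∣ a by simp)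

lemma le_ordf {π : R} {e t : ℕ} {a : R} (ht : t ≤ e) (h : π ^ t ∣ a) : t ≤ ordf π e a :=
  Nat.le_findGreatest (P := fun t => π ^ t ∣ a) ht h

lemma ordf_le (π : R) (e : ℕ) (a : R) : ordf π e a ≤ e :=
  Nat.findGreatest_le (P := fun t => π ^ t ∣ a) e

lemma ordf_lt_of_ne_zero {π : R} {e : ℕ} {a : R} (hπe : π ^ e = 0) (ha : a ≠ 0) :
    ordf π e a < e := by
  rcases lt_or_eq_of_le (ordf_le π e a) with h | h
  · exact h
  · exfalso; apply ha
    have := ordf_dvd π e a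
    rw [h, hπe] at this
    exact zero_dvd_iff.mp this

lemma ordf_unit_decomp {π : R} {e : ℕ} (hπe : π ^ e = 0)
    (hdvd : ∀ a : R, ¬IsUnit a → π ∣ a) {a : R} (ha : a ≠ 0) :
    ∃ u : R, IsUnit u ∧ a = π ^ ordf π e a * u := by
  set v := ordf π e a with hv
  obtain ⟨b, hb⟩ := ordf_dvd π e a
  refine ⟨b, ?_, hb⟩
  by_contra hbu
  obtain ⟨c, hc⟩ := hdvd b hbu
  have hlt := ordf_lt_of_ne_zero hπe ha
  rw [← hv] at hlt
  have hdd : π ^ (v + 1) ∣ a := ⟨c, by rw [hb, hc, pow_succ]; ring⟩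
  have := le_ordf (show v + 1 ≤ e by omega) hdd
  rw [← hv] at this
  omega

/-- step-down: a nonzero nonunit can be divided by π with a strict drop of `ordf`. -/
lemma ordf_step {π : R} {e : ℕ} (he : 1 ≤ e) (hπe : π ^ e = 0)
    (hdvd : ∀ a : R, ¬IsUnit a → π ∣ a) {a : R} (ha : a ≠ 0) (hau : ¬IsUnit a) :
    ∃ c : R, a = π * c ∧ ordf π e c < ordf π e a := by
  set v := ordf π e a with hv
  obtain ⟨c, hc⟩ := hdvd a hau
  have hv1 : 1 ≤ v := le_ordf he (by simpa using hdvd a hau)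
  have hlt := ordf_lt_of_ne_zero hπe ha
  rw [← hv] at hlt
  refine ⟨c, hc, ?_⟩
  by_contra hge
  push_neg at hge
  have : π ^ v ∣ c := dvd_trans (pow_dvd_pow π hge) (ordf_dvd π e c)
  obtain ⟨w, hw⟩ := this
  have hdd : π ^ (v + 1) ∣ a := ⟨w, by rw [hc, hw, pow_succ]; ring⟩
  have := le_ordf (show v + 1 ≤ e by omega) hdd
  rw [← hv] at this
  omega

/-- divisibility comparison via ordf. -/
lemma dvd_of_ordf_le {π : R} {e : ℕ} (hπe : π ^ e = 0)
    (hdvd : ∀ a : R, ¬IsUnit a → π ∣ a) {a b : R} (ha : a ≠ 0) (hb : b ≠ 0)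
    (h : ordf π e a ≤ ordf π e b) : a ∣ b := by
  set v := ordf π e a with hv
  set w := ordf π e b with hw
  obtain ⟨u, hu, hua⟩ := ordf_unit_decomp hπe hdvd ha
  obtain ⟨u', hu', hub⟩ := ordf_unit_decomp hπe hdvd hb
  rw [← hv] at hua; rw [← hw] at hub
  obtain ⟨U, hU⟩ := hu
  refine ⟨↑U⁻¹ * π ^ (w - v) * u', ?_⟩
  rw [hub, hua]
  have h1 : π ^ w = π ^ v * π ^ (w - v) := by rw [← pow_add]; congr 1; omega
  have h2 : (↑U : R) * ↑U⁻¹ = 1 := U.mul_inv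
  rw [h1, ← hU]
  calc π ^ v * π ^ (w - v) * u'
      = π ^ v * ((↑U : R) * ↑U⁻¹) * π ^ (w - v) * u' := by rw [h2]; ring
    _ = π ^ v * ↑U * (↑U⁻¹ * π ^ (w - v) * u') := by ring

/-- every ideal (submodule of R) is principal. -/
lemma submodule_R_principal {π : R} {e : ℕ} (hπe : π ^ e = 0)
    (hdvd : ∀ a : R, ¬IsUnit a → π ∣ a) (I : Submodule R R) :
    ∃ g : R, I = Submodule.span R {g} := by
  by_cases hI : I = ⊥
  · exact ⟨0, by rw [hI, Submodule.span_zero_singleton]⟩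
  · obtain ⟨x₀, hx₀I, hx₀⟩ := Submodule.exists_mem_ne_zero_of_ne_bot hI
    set T : Set ℕ := (ordf π e) '' {x : R | x ∈ I ∧ x ≠ 0} with hT
    have hTne : T.Nonempty := ⟨_, ⟨x₀, ⟨hx₀I, hx₀⟩, rfl⟩⟩
    obtain ⟨g, ⟨hgI, hg0⟩, hgord⟩ := Nat.sInf_mem hTne
    refine ⟨g, le_antisymm ?_ ?_⟩
    · intro y hy
      by_cases hy0 : y = 0
      · simp [hy0]
      · have : ordf π e g ≤ ordf π e y := by
          rw [hgord]
          exact Nat.sInf_le ⟨y, ⟨hy, hy0⟩, rfl⟩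
        obtain ⟨c, hc⟩ := dvd_of_ordf_le hπe hdvd hg0 hy0 this
        rw [Submodule.mem_span_singleton]
        exact ⟨c, by rw [smul_eq_mul, mul_comm, ← hc]⟩
    · rw [Submodule.span_le, Set.singleton_subset_iff]
      exact hgI
end ChainHelpers

section GenBound

open scoped Classical

variable {R : Type*} [CommRing R]

/-- prepend `0` as a linear map. -/
def consL (R : Type*) [CommRing R] (t : ℕ) : (Fin t → R) →ₗ[R] (Fin (t + 1) → R) where
  toFun x := Fin.cons 0 x
  map_add' x y := by
    funext i
    refine Fin.cases ?_ (fun i' => ?_) i <;> simp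
  map_smul' c x := by
    funext i
    refine Fin.cases ?_ (fun i' => ?_) i <;> simp

/-- over a ring in which every submodule of R is principal, submodules of `R^t`
are generated by at most `t` elements. -/
lemma pi_submodule_gen
    (hprin : ∀ I : Submodule R R, ∃ g : R, I = Submodule.span R {g}) :
    ∀ (t : ℕ) (W : Submodule R (Fin t → R)),
      ∃ s : Finset (Fin t → R), s.card ≤ t ∧ Submodule.span R (↑s : Set (Fin t → R)) = W := by
  intro t
  induction t with
  | zero =>
    intro W
    refine ⟨∅, by simp, ?_⟩
    rw [Finset.coe_empty, Submodule.span_empty]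
    symm
    rw [Submodule.eq_bot_iff]
    intro x _
    exact Subsingleton.elim x 0
  | succ t ih =>
    intro W
    set proj : (Fin (t + 1) → R) →ₗ[R] R := LinearMap.proj 0 with hproj
    obtain ⟨g, hg⟩ := hprin (W.map proj)
    have hgJ : g ∈ W.map proj := by rw [hg]; exact Submodule.mem_span_singleton_self g
    obtain ⟨w, hwW, hwg⟩ := hgJ
    set f := consL R t with hf
    obtain ⟨s', hs'card, hs'span⟩ := ih (W.comap f)
    refine ⟨insert w (s'.image f), ?_, ?_⟩
    · calc (insert w (s'.image f)).card ≤ (s'.image f).card + 1 := Finset.card_insert_le _ _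
        _ ≤ s'.card + 1 := by gcongr; exact Finset.card_image_le
        _ ≤ t + 1 := by omega
    · apply le_antisymm
      · rw [Submodule.span_le]
        intro x hx
        rw [Finset.coe_insert] at hx
        rcases hx with rfl | hx
        · exact hwW
        · rw [Finset.coe_image] at hx
          obtain ⟨y, hy, rfl⟩ := hx
          have : y ∈ W.comap f := by
            rw [← hs'span]; exact Submodule.subset_span hy
          exact this
      · intro y hy
        have hy0 : proj y ∈ W.map proj := Submodule.mem_map_of_mem hy
        rw [hg, Submodule.mem_span_singleton] at hy0
        obtain ⟨c, hc⟩ := hy0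
        have hy' : y - c • w ∈ W := W.sub_mem hy (W.smul_mem c hwW)
        have hy'0 : (y - c • w) 0 = 0 := by
          have : proj w = g := hwg
          have hpy : (y - c • w) 0 = proj y - c * proj w := by
            simp [hproj]
          rw [hpy, this, ← hc]
          simp
        have hcons : f (Fin.tail (y - c • w)) = y - c • w := by
          show Fin.cons 0 (Fin.tail (y - c • w)) = y - c • w
          rw [← hy'0]
          exact Fin.cons_self_tail _
        have htail : Fin.tail (y - c • w) ∈ W.comap f := by
          rw [Submodule.mem_comap, hcons]; exact hy'
        rw [← hs'span] at htail
        have : f (Fin.tail (y - c • w)) ∈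
            Submodule.span R (↑(insert w (s'.image f)) : Set (Fin (t+1) → R)) := by
          have h1 : f (Fin.tail (y - c • w)) ∈ Submodule.map f (Submodule.span R (↑s' : Set (Fin t → R))) :=
            Submodule.mem_map_of_mem htail
          rw [Submodule.map_span] at h1
          refine Submodule.span_mono ?_ h1
          intro z hz
          obtain ⟨z', hz', rfl⟩ := hz
          rw [Finset.coe_insert]
          exact Set.mem_insert_of_mem _ (Finset.mem_coe.mpr (Finset.mem_image_of_mem _ (Finset.mem_coe.mp hz')))
        have hwmem : w ∈ Submodule.span R (↑(insert w (s'.image f)) : Set (Fin (t+1) → R)) :=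
          Submodule.subset_span (by simp)
        have := Submodule.add_mem _ (Submodule.smul_mem _ c hwmem) this
        rw [hcons] at this
        convert this using 1
        ring

/-- bounded generation: a submodule contained in the span of `t` vectors is
spanned by a finset of at most `t` vectors. -/
lemma bounded_gen {M : Type*} [AddCommGroup M] [Module R M]
    (hprin : ∀ I : Submodule R R, ∃ g : R, I = Submodule.span R {g})
    {t : ℕ} (v : Fin t → M) (W : Submodule R M)
    (hW : W ≤ Submodule.span R (Set.range v)) :
    ∃ s : Finset M, s.card ≤ t ∧ Submodule.span R (↑s : Set M) = W := by
  classical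
  set F : (Fin t → R) →ₗ[R] M :=
    { toFun := fun c => ∑ i, c i • v i
      map_add' := by intro x y; simp [add_smul, Finset.sum_add_distrib]
      map_smul' := by intro r x; simp [smul_smul, Finset.smul_sum] } with hF
  have hrange : Submodule.span R (Set.range v) ≤ LinearMap.range F := by
    rw [Submodule.span_le]
    rintro x ⟨i, rfl⟩
    refine ⟨Pi.single i 1, ?_⟩
    simp [hF, Pi.single_apply, ite_smul]
  obtain ⟨s', hs'card, hs'span⟩ := pi_submodule_gen hprin t (W.comap F)
  refine ⟨s'.image F, le_trans Finset.card_image_le hs'card, ?_⟩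
  rw [Finset.coe_image, ← Submodule.map_span, hs'span, Submodule.map_comap_eq]
  exact inf_eq_right.mpr (le_trans hW hrange)

end GenBound
section ElimLemma
open scoped Classical
variable {R : Type*} [CommRing R]

noncomputable def deltaM (π : R) (e : ℕ) {N r : ℕ} (B : Matrix (Fin N) (Fin r) R) : ℕ :=
  ∑ p : Fin N × Fin r, ordf π e (B p.1 p.2)

lemma elim_lemma (π : R) (e : ℕ) (he : 1 ≤ e) (hπe : π ^ e = 0)
    (hdvd : ∀ a : R, ¬IsUnit a → π ∣ a) (r : ℕ) :
    ∀ (N : ℕ) (B : Matrix (Fin N) (Fin r) R),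
      ∃ G : Matrix (Fin N) (Fin N) R, IsUnit G.det ∧
        ∀ (i : Fin N) (j : Fin r), r ≤ (i : ℕ) → (G * B) i j = 0 := by
  induction r with
  | zero => exact fun N B => ⟨1, by simp, fun i j _ => j.elim0⟩
  | succ r ih =>
    suffices H : ∀ (D N : ℕ) (B : Matrix (Fin N) (Fin (r+1)) R), deltaM π e B ≤ D →
        ∃ G : Matrix (Fin N) (Fin N) R, IsUnit G.det ∧
          ∀ (i : Fin N) (j : Fin (r+1)), r + 1 ≤ (i : ℕ) → (G * B) i j = 0 by
      intro N B; exact H (deltaM π e B) N B le_rfl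
    intro D
    induction D using Nat.strong_induction_on with
    | _ D ihD =>
    intro N B hδ
    by_cases hB0 : B = 0
    · exact ⟨1, by simp, fun i j _ => by simp [hB0]⟩
    by_cases hu : ∃ i j, IsUnit (B i j)
    · -- unit case
      obtain ⟨i₀, j₀, huu⟩ := hu
      match N, B, hδ with
      | Nat.succ N', B, hδ =>
      set σ : Equiv.Perm (Fin (N'+1)) := Equiv.swap 0 i₀ with hσ
      set τ : Equiv.Perm (Fin (r+1)) := Equiv.swap 0 j₀ with hτ
      set B₁ := B.submatrix σ τ with hB₁
      have hB₁00 : IsUnit (B₁ 0 0) := by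
        rw [hB₁, Matrix.submatrix_apply, hσ, hτ]
        simpa [Equiv.swap_apply_left] using huu
      obtain ⟨U, hU⟩ := hB₁00
      set c : Fin (N'+1) → R := fun i => if i = 0 then 0 else -(B₁ i 0 * ↑U⁻¹) with hc
      set G₂ : Matrix (Fin (N'+1)) (Fin (N'+1)) R :=
        1 + Matrix.replicateCol (Fin 1) c * Matrix.replicateRow (Fin 1) (Pi.single 0 1 : Fin (N'+1) → R) with hG₂
      have hG₂det : IsUnit G₂.det := by
        have hdet1 : (1 + Matrix.replicateCol (Fin 1) c * Matrix.replicateRow (Fin 1) (Pi.single 0 1 : Fin (N'+1) → R)).det = 1 + (Pi.single 0 1 : Fin (N'+1) → R) ⬝ᵥ c := by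
          convert Matrix.det_one_add_replicateCol_mul_replicateRow (ι := Fin 1) c (Pi.single 0 1 : Fin (N'+1) → R)
        rw [hG₂, hdet1]
        have h00 : (Pi.single 0 1 : Fin (N'+1) → R) ⬝ᵥ c = c 0 := by
          simp [dotProduct, Pi.single_apply]
        rw [h00, hc]
        simp
      set B₂ := G₂ * B₁ with hB₂def
      have hrowcol : ∀ (i : Fin (N'+1)) (j : Fin (r+1)), B₂ i j = B₁ i j + c i * B₁ 0 j := by
        intro i j
        rw [hB₂def, hG₂, Matrix.add_mul, Matrix.one_mul]
        congr 1
        rw [Matrix.mul_assoc]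
        have hrB : (Matrix.replicateRow (Fin 1) (Pi.single 0 1 : Fin (N'+1) → R) * B₁) = Matrix.of (fun (_ : Fin 1) j => B₁ 0 j) := by
          ext k j'
          simp [Matrix.mul_apply, Matrix.replicateRow_apply, Pi.single_apply]
        rw [hrB]
        simp [Matrix.mul_apply, Matrix.replicateCol_apply]
      have hB₂0 : ∀ i : Fin (N'+1), i ≠ 0 → B₂ i 0 = 0 := by
        intro i hi
        rw [hrowcol i 0, hc]
        simp only [if_neg hi]
        rw [← hU]
        have : (↑U⁻¹ : R) * ↑U = 1 := U.inv_mul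
        calc B₁ i 0 + -(B₁ i 0 * ↑U⁻¹) * ↑U = B₁ i 0 - B₁ i 0 * ((↑U⁻¹ : R) * ↑U) := by ring
          _ = 0 := by rw [this]; ring
      set B₃ := B₂.submatrix Fin.succ Fin.succ with hB₃
      obtain ⟨G₃, hG₃det, hG₃⟩ := ih N' B₃
      set G₄ : Matrix (Fin (N'+1)) (Fin (N'+1)) R :=
        Matrix.of (fun i => Fin.cases (Pi.single 0 1) (fun i' => Fin.cons 0 (G₃ i')) i) with hG₄
      have hG₄0 : ∀ j, G₄ 0 j = (Pi.single 0 1 : Fin (N'+1) → R) j := by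
        intro j; rw [hG₄]; simp
      have hG₄s0 : ∀ i' : Fin N', G₄ (Fin.succ i') 0 = 0 := by
        intro i'; rw [hG₄]; simp
      have hG₄ss : ∀ (i' l' : Fin N'), G₄ (Fin.succ i') (Fin.succ l') = G₃ i' l' := by
        intro i' l'; rw [hG₄]; simp
      have hG₄sub : G₄.submatrix Fin.succ Fin.succ = G₃ := by
        ext i' l'; exact hG₄ss i' l'
      have hG₄det : IsUnit G₄.det := by
        rw [Matrix.det_succ_row_zero]
        rw [Finset.sum_eq_single 0]
        · rw [hG₄0 0]
          simp only [Fin.val_zero, pow_zero, one_mul, Pi.single_eq_same]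
          rw [Fin.succAbove_zero, hG₄sub]
          simpa using hG₃det
        · intro j _ hj
          rw [hG₄0 j, Pi.single_eq_of_ne hj]
          ring
        · intro h; exact absurd (Finset.mem_univ _) h
      have hG₄B₂ : ∀ (i' : Fin N') (j : Fin (r+1)), r ≤ (i' : ℕ) → (G₄ * B₂) (Fin.succ i') j = 0 := by
        intro i' j hi'
        rw [Matrix.mul_apply, Fin.sum_univ_succ, hG₄s0 i', zero_mul, zero_add]
        refine Fin.cases ?_ (fun j' => ?_) j
        · apply Finset.sum_eq_zero
          intro l' _
          rw [hB₂0 (Fin.succ l') (Fin.succ_ne_zero l'), mul_zero]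
        · have := hG₃ i' j' hi'
          rw [Matrix.mul_apply] at this
          rw [← this]
          apply Finset.sum_congr rfl
          intro l' _
          rw [hG₄ss, hB₃, Matrix.submatrix_apply]
      -- assemble
      set Pσ : Matrix (Fin (N'+1)) (Fin (N'+1)) R := σ.toPEquiv.toMatrix with hPσ
      have hPσdet : IsUnit Pσ.det := by
        rw [hPσ]
        have : (σ.toPEquiv.toMatrix : Matrix (Fin (N'+1)) (Fin (N'+1)) R).det = Equiv.Perm.sign σ :=
          Matrix.det_permutation σ
        rw [this]
        rcases Int.units_eq_one_or (Equiv.Perm.sign σ) with h | h <;> rw [h] <;> simp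
      refine ⟨G₄ * G₂ * Pσ, ?_, ?_⟩
      · rw [Matrix.det_mul, Matrix.det_mul]
        exact (hG₄det.mul hG₂det).mul hPσdet
      · intro i j hij
        refine Fin.cases ?_ (fun i' hi' => ?_) i hij
        · intro h; exact absurd h (by simp)
        · have hswap : τ (τ j) = j := Equiv.swap_apply_self _ _ _
          have e1 : G₄ * G₂ * Pσ * B = G₄ * G₂ * (B.submatrix σ id) := by
            rw [Matrix.mul_assoc (G₄ * G₂), hPσ, PEquiv.toMatrix_toPEquiv_mul]
          have e2 : G₄ * B₂ = (G₄ * G₂ * (B.submatrix σ id)).submatrix id τ := by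
            rw [hB₂def, ← Matrix.mul_assoc, hB₁]
            ext i'' j''
            simp [Matrix.mul_apply, Matrix.submatrix_apply]
          have hz := hG₄B₂ i' (τ j) (by
            have : (Fin.succ i' : Fin (N'+1)).val = i'.val + 1 := Fin.val_succ i'
            omega)
          have e3 := congrFun (congrFun e2 (Fin.succ i')) (τ j)
          rw [Matrix.submatrix_apply, hswap] at e3
          rw [e1]
          rw [e3] at hz
          exact hz
    · -- all entries nonunits
      push_neg at hu
      have hstep : ∀ (i : Fin N) (j : Fin (r+1)), ∃ c : R, B i j = π * c ∧
          (B i j = 0 → c = 0) ∧ (B i j ≠ 0 → ordf π e c < ordf π e (B i j)) := by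
        intro i j
        by_cases h0 : B i j = 0
        · exact ⟨0, by rw [h0, mul_zero], fun _ => rfl, fun h => absurd h0 h⟩
        · obtain ⟨c, hc1, hc2⟩ := ordf_step he hπe hdvd h0 (hu i j)
          exact ⟨c, hc1, fun h => absurd h h0, fun _ => hc2⟩
      choose Bc hBc1 hBc2 hBc3 using hstep
      have hBeq : B = π • Matrix.of (fun i j => Bc i j) := by
        ext i j; simpa using hBc1 i j
      have hδlt : deltaM π e (Matrix.of fun i j => Bc i j) < deltaM π e B := by
        have hex : ∃ p : Fin N × Fin (r+1), B p.1 p.2 ≠ 0 := by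
          by_contra hall
          push_neg at hall
          exact hB0 (by ext i j; exact hall (i, j))
        obtain ⟨p₀, hp₀⟩ := hex
        apply Finset.sum_lt_sum
        · intro p _
          by_cases h0 : B p.1 p.2 = 0
          · simp [Matrix.of_apply, hBc2 p.1 p.2 h0, h0]
          · exact le_of_lt (hBc3 p.1 p.2 h0)
        · exact ⟨p₀, Finset.mem_univ _, hBc3 p₀.1 p₀.2 hp₀⟩
      obtain ⟨G, hG, hGz⟩ := ihD (deltaM π e (Matrix.of fun i j => Bc i j))
        (lt_of_lt_of_le hδlt hδ) N _ le_rfl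
      refine ⟨G, hG, fun i j hij => ?_⟩
      rw [hBeq, Matrix.mul_smul]
      simp [hGz i j hij]
end ElimLemma

section MatRankHelpers
variable {R : Type*} [CommRing R] {m n : ℕ}

lemma matRank_mem (X : Matrix (Fin m) (Fin n) R) :
    ∃ s : Finset (Fin m → R), s.card = matRank X ∧
      Submodule.span R (↑s : Set (Fin m → R)) = Submodule.span R (Set.range Xᵀ) := by
  classical
  have hne : {r : ℕ | ∃ s : Finset (Fin m → R), s.card = r ∧
      Submodule.span R (↑s : Set (Fin m → R)) = Submodule.span R (Set.range Xᵀ)}.Nonempty := by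
    refine ⟨(Finset.univ.image fun j => Xᵀ j).card, Finset.univ.image fun j => Xᵀ j, rfl, ?_⟩
    congr 1
    rw [Finset.coe_image, Finset.coe_univ, Set.image_univ]
  obtain ⟨s, hcard, hspan⟩ := Nat.sInf_mem hne
  exact ⟨s, hcard, hspan⟩

lemma matRank_le_width (X : Matrix (Fin m) (Fin n) R) : matRank X ≤ n := by
  classical
  have hmem : ((Finset.univ.image fun j => Xᵀ j)).card ∈ {r : ℕ | ∃ s : Finset (Fin m → R),
      s.card = r ∧ Submodule.span R (↑s : Set (Fin m → R)) = Submodule.span R (Set.range Xᵀ)} := by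
    refine ⟨Finset.univ.image fun j => Xᵀ j, rfl, ?_⟩
    congr 1
    rw [Finset.coe_image, Finset.coe_univ, Set.image_univ]
  refine le_trans (Nat.sInf_le hmem) (le_trans Finset.card_image_le ?_)
  simp

lemma eq_zero_of_matRank_eq_zero {X : Matrix (Fin m) (Fin n) R} (h : matRank X = 0) :
    X = 0 := by
  obtain ⟨s, hcard, hspan⟩ := matRank_mem X
  rw [h, Finset.card_eq_zero] at hcard
  rw [hcard] at hspan
  simp only [Finset.coe_empty, Submodule.span_empty] at hspan
  have : ∀ j, Xᵀ j = 0 := by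
    intro j
    have : Xᵀ j ∈ Submodule.span R (Set.range Xᵀ) := Submodule.subset_span ⟨j, rfl⟩
    rw [← hspan] at this
    simpa using this
  ext i j
  have := congrFun (this j) i
  simpa using this

lemma trace_mul_transpose (M N : Matrix (Fin m) (Fin n) R) :
    Matrix.trace (M * Nᵀ) = ∑ a, ∑ j, M a j * N a j := by
  simp [Matrix.trace, Matrix.diag, Matrix.mul_apply, Matrix.transpose_apply]

end MatRankHelpers

/-- Let `R` be a finite chain ring, `m ≤ n`, and `C ⊆ M_{m,n}(R)` a code
(a free `R`-submodule) with `0 < rank C < mn` and minimum rank distance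
`d := min{rank X : X ∈ C, X ≠ 0}`. If `C` is MRD, i.e. `|C| = |R|^{m(n−d+1)}`, then every
nonzero `Y ∈ C^⊥` satisfies `rank Y ≥ n − d + 2`. -/
theorem dual_of_MRD_min_rank
    {R : Type*} [CommRing R] [Finite R] [IsLocalRing R]
    (hchain : (IsLocalRing.maximalIdeal R).IsPrincipal)
    (m n : ℕ) (hmn : m ≤ n)
    (C : Submodule R (Matrix (Fin m) (Fin n) R)) [Module.Free R ↥C]
    (hpos : 0 < Module.finrank R ↥C) (hlt : Module.finrank R ↥C < m * n)
    (d : ℕ) (hd : d = sInf {r : ℕ | ∃ X ∈ C, X ≠ 0 ∧ matRank X = r})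
    (hMRD : Nat.card ↥C = Nat.card R ^ (m * (n - d + 1))) :
    ∀ Y ∈ dualCode C, Y ≠ 0 → n - d + 2 ≤ matRank Y := by
  classical
  intro Y hYdual hY0
  by_contra hcon
  push_neg at hcon
  -- chain ring data
  obtain ⟨π, hπ⟩ := hchain.1
  obtain ⟨e₀, he₀⟩ := IsArtinianRing.isNilpotent_jacobson_bot (R := R)
  have hdvd : ∀ a : R, ¬IsUnit a → π ∣ a := by
    intro a ha
    have hmem : a ∈ IsLocalRing.maximalIdeal R := ha
    rw [hπ] at hmem
    exact (Ideal.mem_span_singleton).mp hmem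
  have hπe₀ : π ^ e₀ = 0 := by
    have hmem : π ∈ IsLocalRing.maximalIdeal R := by
      rw [hπ]; exact Submodule.mem_span_singleton_self π
    have h2 : π ^ e₀ ∈ (IsLocalRing.maximalIdeal R) ^ e₀ := Ideal.pow_mem_pow hmem e₀
    rw [← IsLocalRing.jacobson_eq_maximalIdeal (⊥ : Ideal R) bot_ne_top, he₀] at h2
    simpa using h2
  set e := e₀ + 1 with he_def
  have he : 1 ≤ e := by omega
  have hπe : π ^ e = 0 := by rw [he_def, pow_succ, hπe₀, zero_mul]
  have hprin : ∀ I : Submodule R R, ∃ g : R, I = Submodule.span R {g} :=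
    submodule_R_principal hπe hdvd
  -- basic facts about d
  have hCne : ∃ X ∈ C, X ≠ (0 : Matrix (Fin m) (Fin n) R) := by
    by_contra hall
    push_neg at hall
    have hbot : C = ⊥ := by rw [Submodule.eq_bot_iff]; exact hall
    rw [hbot] at hpos
    simp [finrank_bot] at hpos
  obtain ⟨X₀, hX₀C, hX₀⟩ := hCne
  have hdmem : d ∈ {r : ℕ | ∃ X ∈ C, X ≠ 0 ∧ matRank X = r} := by
    rw [hd]; exact Nat.sInf_mem ⟨matRank X₀, X₀, hX₀C, hX₀, rfl⟩
  obtain ⟨X₁, hX₁C, hX₁0, hX₁r⟩ := hdmem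
  have hd1 : 1 ≤ d := by
    rcases Nat.eq_zero_or_pos d with h0 | h
    · exact absurd (eq_zero_of_matRank_eq_zero (by rw [hX₁r, h0])) hX₁0
    · exact h
  have hdn : d ≤ n := hX₁r ▸ matRank_le_width X₁
  set k := n - d + 1 with hk
  have hkn : k ≤ n := by omega
  have hYk : matRank Y ≤ k := by omega
  -- factor Y through s.card generators
  obtain ⟨s, hscard, hsspan⟩ := matRank_mem Y
  have hr'k : s.card ≤ k := by rw [hscard]; omega
  set p : Fin s.card → (Fin m → R) := fun i => ↑(s.equivFin.symm i) with hp
  have hrange : Set.range p = (↑s : Set (Fin m → R)) := by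
    ext x
    constructor
    · rintro ⟨i, rfl⟩
      exact (s.equivFin.symm i).2
    · intro hx
      exact ⟨s.equivFin ⟨x, hx⟩, by rw [hp]; simp⟩
  have hcols : ∀ j, Yᵀ j ∈ Submodule.span R (Set.range p) := by
    intro j
    rw [hrange, hsspan]
    exact Submodule.subset_span ⟨j, rfl⟩
  have hexist : ∀ j, ∃ q : Fin s.card → R, ∑ i, q i • p i = Yᵀ j :=
    fun j => (Submodule.mem_span_range_iff_exists_fun R).mp (hcols j)
  choose Q hQ using hexist
  set Pm : Matrix (Fin m) (Fin s.card) R := Matrix.of (fun a i => p i a) with hPm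
  set Qm : Matrix (Fin s.card) (Fin n) R := Matrix.of (fun i j => Q j i) with hQm
  have hfact : Pm * Qm = Y := by
    ext a j
    have hj := congrFun (hQ j) a
    rw [Finset.sum_apply] at hj
    simp only [Pi.smul_apply, smul_eq_mul] at hj
    rw [Matrix.mul_apply]
    simp only [hPm, hQm, Matrix.of_apply]
    rw [show Y a j = Yᵀ j a from rfl, ← hj]
    apply Finset.sum_congr rfl
    intros; ring
  -- eliminate: row space of Y inside first k coordinates
  obtain ⟨G, hGdet, hGz⟩ := elim_lemma π e he hπe hdvd s.card n Qmᵀ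
  letI : Invertible G := G.invertibleOfIsUnitDet hGdet
  set E := ⅟G with hE
  have hEG : E * G = 1 := invOf_mul_self G
  set Z := Y * Gᵀ with hZ
  have hZcol : ∀ (a : Fin m) (j : Fin n), k ≤ (j : ℕ) → Z a j = 0 := by
    intro a j hj
    have hQG : ∀ i, (Qm * Gᵀ) i j = 0 := by
      intro i
      rw [Matrix.mul_apply]
      have h0 : (G * Qmᵀ) j i = 0 := hGz j i (le_trans hr'k hj)
      rw [Matrix.mul_apply] at h0
      rw [← h0]
      apply Finset.sum_congr rfl
      intro l _
      rw [Matrix.transpose_apply, Matrix.transpose_apply]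
      ring
    rw [hZ, ← hfact, Matrix.mul_assoc, Matrix.mul_apply]
    apply Finset.sum_eq_zero
    intro i _
    rw [hQG i, mul_zero]
  have hYZ : Y = Z * Eᵀ := by
    rw [hZ, Matrix.mul_assoc, ← Matrix.transpose_mul, hEG, Matrix.transpose_one, Matrix.mul_one]
  have hZ0 : Z ≠ 0 := fun h => hY0 (by rw [hYZ, h, Matrix.zero_mul])
  -- the projection map
  set ψ : ↥C → Matrix (Fin m) (Fin k) R :=
    fun X => ((X : Matrix (Fin m) (Fin n) R) * E).submatrix id (Fin.castLE hkn) with hψ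
  have hker : ∀ Xm : Matrix (Fin m) (Fin n) R, Xm ∈ C →
      (∀ (a : Fin m) (l : Fin n), (l : ℕ) < k → (Xm * E) a l = 0) → Xm = 0 := by
    intro Xm hXmC hXmz
    by_contra hXm0
    have hge : d ≤ matRank Xm := by
      rw [hd]; exact Nat.sInf_le ⟨Xm, hXmC, hXm0, rfl⟩
    set v : Fin (n - k) → (Fin m → R) := fun t a => (Xm * E) a ⟨k + (t : ℕ), by omega⟩ with hv
    have hsub : Submodule.span R (Set.range Xmᵀ) ≤ Submodule.span R (Set.range v) := by
      rw [Submodule.span_le]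
      rintro x ⟨j, rfl⟩
      have hXdec : Xmᵀ j = ∑ l : Fin n, G l j • (fun a => (Xm * E) a l) := by
        funext a
        rw [Finset.sum_apply]
        have hXm1 : Xm = Xm * E * G := by rw [Matrix.mul_assoc, hEG, Matrix.mul_one]
        calc Xmᵀ j a = Xm a j := rfl
          _ = (Xm * E * G) a j := by rw [← hXm1]
          _ = ∑ l, (Xm * E) a l * G l j := Matrix.mul_apply
          _ = ∑ l, (G l j • fun a' => (Xm * E) a' l) a := by
              apply Finset.sum_congr rfl
              intros; simp [smul_eq_mul]; ring
      rw [hXdec]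
      apply Submodule.sum_mem
      intro l _
      by_cases hl : (l : ℕ) < k
      · have h0 : (fun a => (Xm * E) a l) = (0 : Fin m → R) := by
          funext a; exact hXmz a l hl
        rw [h0, smul_zero]
        exact Submodule.zero_mem _
      · have hlk : k ≤ (l : ℕ) := by omega
        have hvl : (fun a => (Xm * E) a l) = v ⟨(l : ℕ) - k, by omega⟩ := by
          funext a
          simp only [hv]
          have hfin : (⟨k + ((l : ℕ) - k), by omega⟩ : Fin n) = l := by
            apply Fin.ext
            show k + ((l : ℕ) - k) = (l : ℕ)
            omega
          rw [hfin]
        rw [hvl]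
        exact Submodule.smul_mem _ _ (Submodule.subset_span ⟨_, rfl⟩)
    obtain ⟨s₂, hs₂card, hs₂span⟩ :=
      bounded_gen hprin v (Submodule.span R (Set.range Xmᵀ)) hsub
    have hle : matRank Xm ≤ n - k := le_trans (Nat.sInf_le ⟨s₂, rfl, hs₂span⟩) hs₂card
    omega
  have hinj : Function.Injective ψ := by
    intro X₁' X₂' heq
    have hsubC : ((X₁' : Matrix (Fin m) (Fin n) R) - (X₂' : Matrix (Fin m) (Fin n) R)) ∈ C :=
      Submodule.sub_mem C X₁'.2 X₂'.2
    have hz : ∀ (a : Fin m) (l : Fin n), (l : ℕ) < k →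
        (((X₁' : Matrix (Fin m) (Fin n) R) - (X₂' : Matrix (Fin m) (Fin n) R)) * E) a l = 0 := by
      intro a l hl
      have hthis := congrFun (congrFun heq a) ⟨(l : ℕ), hl⟩
      simp only [hψ, Matrix.submatrix_apply, id] at hthis
      have hcast : (Fin.castLE hkn ⟨(l : ℕ), hl⟩) = l := by
        apply Fin.ext; rfl
      rw [hcast] at hthis
      rw [Matrix.sub_mul, Matrix.sub_apply, hthis, sub_self]
    have h0 := hker _ hsubC hz
    exact Subtype.ext (by rwa [sub_eq_zero] at h0)
  have hcard : Nat.card ↥C = Nat.card (Matrix (Fin m) (Fin k) R) := by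
    rw [hMRD]
    have h1 : Nat.card (Matrix (Fin m) (Fin k) R) = Nat.card (Fin m → Fin k → R) := rfl
    rw [h1, Nat.card_fun, Nat.card_fun]
    rw [Nat.card_eq_fintype_card (α := Fin m), Nat.card_eq_fintype_card (α := Fin k)]
    simp only [Fintype.card_fin]
    rw [← pow_mul, hk]
    ring_nf
  have hbij : Function.Bijective ψ := (Nat.bijective_iff_injective_and_card ψ).mpr ⟨hinj, hcard⟩
  -- pick a nonzero entry of Z in a column < k
  have hZabex : ∃ (a : Fin m) (b : Fin n), (b : ℕ) < k ∧ Z a b ≠ 0 := by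
    by_contra hall
    push_neg at hall
    apply hZ0
    ext a b
    by_cases hb : (b : ℕ) < k
    · simpa using hall a b hb
    · simpa using hZcol a b (by omega)
  obtain ⟨a, b, hbk, hZab⟩ := hZabex
  set W : Matrix (Fin m) (Fin k) R :=
    (Matrix.single a b (1 : R)).submatrix id (Fin.castLE hkn) with hW
  obtain ⟨X, hXW⟩ := hbij.2 W
  have htr : Matrix.trace ((X : Matrix (Fin m) (Fin n) R) * Yᵀ) = 0 := hYdual _ X.2
  have htr2 : Matrix.trace ((X : Matrix (Fin m) (Fin n) R) * Yᵀ) =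
      ∑ a', ∑ j, ((X : Matrix (Fin m) (Fin n) R) * E) a' j * Z a' j := by
    rw [hYZ, Matrix.transpose_mul, Matrix.transpose_transpose, ← Matrix.mul_assoc]
    exact trace_mul_transpose _ _
  have hXE : ∀ (a' : Fin m) (j : Fin n), (j : ℕ) < k →
      ((X : Matrix (Fin m) (Fin n) R) * E) a' j = Matrix.single a b (1 : R) a' j := by
    intro a' j hj
    have hthis := congrFun (congrFun hXW a') ⟨(j : ℕ), hj⟩
    simp only [hψ, hW, Matrix.submatrix_apply, id] at hthis
    have hcast : (Fin.castLE hkn ⟨(j : ℕ), hj⟩) = j := by apply Fin.ext; rfl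
    rwa [hcast] at hthis
  have hsum : ∑ a', ∑ j, ((X : Matrix (Fin m) (Fin n) R) * E) a' j * Z a' j = Z a b := by
    have hterm : ∀ (a' : Fin m) (j : Fin n),
        ((X : Matrix (Fin m) (Fin n) R) * E) a' j * Z a' j =
          Matrix.single a b (1 : R) a' j * Z a' j := by
      intro a' j
      by_cases hj : (j : ℕ) < k
      · rw [hXE a' j hj]
      · rw [hZcol a' j (by omega), mul_zero, mul_zero]
    calc ∑ a', ∑ j, ((X : Matrix (Fin m) (Fin n) R) * E) a' j * Z a' j
        = ∑ a', ∑ j, Matrix.single a b (1 : R) a' j * Z a' j := by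
          apply Finset.sum_congr rfl; intro a' _
          apply Finset.sum_congr rfl; intro j _
          exact hterm a' j
      _ = Z a b := by
          simp [Matrix.single, ite_and, ite_mul, Finset.sum_ite_eq]
  rw [htr2, hsum] at htr
  exact hZab htr
end
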